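/- arXiv:1605.08721 — 7 statements merged into one kernel-verified Lean document; each statement's English description precedes it below -/
import Mathlib

section
/- If f(p) = D(a_0,...,a_n;p) is an optimal penalty function (i.e., (a_0,...,a_n) minimizes the sup-norm of D over all choices in [0,1]^{n+1}), then no a_i is a point of absolute maximum of f; that is, M(f) \cap {a_0,...,a_n} = \emptyset, where M(f) = {x \in [0,1] : f(x) = \|f\|_\infty}. -/
/-!
If some `aᵢ ∈ (0,1)` were a maximum point of `f`, then near `aᵢ` we could write
`f = g + c · |· - aᵢ|` with `g`, `c` differentiable at `aᵢ` and `c(aᵢ) ≥ Bᵢ(aᵢ) > 0`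
(`Bₖ` the Bernstein weights); such a function has a convex corner at `aᵢ`, not a maximum.

By the symmetry `p ↦ 1 - p`, `aₖ ↦ 1 - aₙ₋ₖ`, it remains to exclude `aᵢ = 0` with
`f(0) = |a₀| = M := ‖f‖_∞`, i.e. `a₀ = M`; comparing with the constant tuple `1/2` gives
`M ≤ 1/2`. Lower `a₀` by `δ`, raise `aᵢ` to `ε`, and raise `aₙ` by at most `δ'`, with
`δ' ≪ δ ≪ ε`. For `p ≤ M/2` the change of `a₀` gains `δ (1-p)ⁿ` while that of `aᵢ` costs only
`O(ε²)`; for `M/2 ≤ p ≤ 1 - M/2` the change of `aᵢ` gains `ε Bᵢ(p) ≥ ε (M/2)ⁿ`; for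
`1 - M/2 ≤ p < 1` this gain is of order `(1-p)ⁿ⁻ⁱ`, which beats the loss `δ (1-p)ⁿ` at `a₀`
since `i ≥ 1`; and the new `aₙ ≥ 1 - M + δ'` makes `f(1) = |1 - aₙ| < M`.
So the new tuple has sup-norm `< M`, contradicting optimality.
-/

open Finset

/-- The penalty function `D(a₀,…,aₙ;p)`. -/
noncomputable def penalty (n : ℕ) (a : Fin (n+1) → ℝ) (p : ℝ) : ℝ :=
  ∑ k : Fin (n+1), (n.choose (k:ℕ) : ℝ) * p ^ (k:ℕ) * (1 - p) ^ (n - (k:ℕ)) * |p - a k|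

/-- `(a₀,…,aₙ)` is optimal: all aₖ lie in `[0,1]` and the sup-norm of the penalty
function on `[0,1]` is minimal among all such tuples. -/
def IsOptimal (n : ℕ) (a : Fin (n+1) → ℝ) : Prop :=
  (∀ k, a k ∈ Set.Icc (0:ℝ) 1) ∧
  ∀ b : Fin (n+1) → ℝ, (∀ k, b k ∈ Set.Icc (0:ℝ) 1) →
    sSup ((fun p => penalty n a p) '' Set.Icc (0:ℝ) 1) ≤
      sSup ((fun p => penalty n b p) '' Set.Icc (0:ℝ) 1)

open Topology

noncomputable def bernsteinWeight (n k : ℕ) (p : ℝ) : ℝ :=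
  n.choose k * p ^ k * (1 - p) ^ (n - k)

namespace bernsteinWeight

variable {n k : ℕ} {p : ℝ}

lemma nonneg (hp : p ∈ Set.Icc (0:ℝ) 1) : 0 ≤ bernsteinWeight n k p := by
  have : 0 ≤ 1 - p := by linarith [hp.2]
  have := hp.1
  unfold bernsteinWeight; positivity

lemma pos (hk : k ≤ n) (hp : p ∈ Set.Ioo (0:ℝ) 1) : 0 < bernsteinWeight n k p := by
  have : (0:ℝ) < n.choose k := by exact_mod_cast Nat.choose_pos hk
  have : 0 < 1 - p := by linarith [hp.2]
  have := hp.1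
  unfold bernsteinWeight; positivity

lemma sum_fin (n : ℕ) (p : ℝ) : ∑ k : Fin (n+1), bernsteinWeight n k p = 1 := by
  rw [Fin.sum_univ_eq_sum_range (bernsteinWeight n · p)]
  convert (add_pow p (1 - p) n).symm using 2 with k
  · unfold bernsteinWeight; ring
  · simp

lemma zero_right (n : ℕ) (p : ℝ) : bernsteinWeight n 0 p = (1 - p) ^ n := by
  simp [bernsteinWeight]

lemma self (n : ℕ) (p : ℝ) : bernsteinWeight n n p = p ^ n := by
  simp [bernsteinWeight]

lemma le_choose_mul (hk : 1 ≤ k) (hp : p ∈ Set.Icc (0:ℝ) 1) :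
    bernsteinWeight n k p ≤ n.choose k * p := by
  obtain ⟨hp0, hp1⟩ := hp
  have hpk : p ^ k ≤ p := pow_le_of_le_one hp0 hp1 (by omega)
  have hq : (1 - p) ^ (n - k) ≤ 1 := pow_le_one₀ (by linarith) (by linarith)
  unfold bernsteinWeight
  calc (n.choose k : ℝ) * p ^ k * (1 - p) ^ (n - k) ≤ n.choose k * p * 1 := by gcongr
    _ = n.choose k * p := mul_one _

lemma pow_mul_pow_le (hk : k ≤ n) {q : ℝ} (hq : 0 ≤ q) (hqp : q ≤ p) (hp1 : p ≤ 1) :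
    q ^ k * (1 - p) ^ (n - k) ≤ bernsteinWeight n k p := by
  have hC : (1:ℝ) ≤ n.choose k := by exact_mod_cast Nat.choose_pos hk
  have h1p : 0 ≤ 1 - p := by linarith
  have hp : 0 ≤ p := hq.trans hqp
  unfold bernsteinWeight
  calc q ^ k * (1 - p) ^ (n - k) ≤ 1 * p ^ k * (1 - p) ^ (n - k) := by
        rw [one_mul]; gcongr
    _ ≤ _ := by gcongr

lemma pow_le (hk : k ≤ n) {q : ℝ} (hq : 0 ≤ q) (hqp : q ≤ p) (hpq : p ≤ 1 - q) :
    q ^ n ≤ bernsteinWeight n k p :=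
  calc q ^ n = q ^ k * q ^ (n - k) := by rw [← pow_add, Nat.add_sub_cancel' hk]
    _ ≤ q ^ k * (1 - p) ^ (n - k) := by gcongr; linarith
    _ ≤ _ := pow_mul_pow_le hk hq hqp (by linarith)

lemma mul_abs_sub_sub_abs_le (hk : 1 ≤ k) {ε : ℝ} (hε : 0 ≤ ε) (hp : p ∈ Set.Icc (0:ℝ) 1) :
    bernsteinWeight n k p * (|p - ε| - |p|) ≤ n.choose k * ε ^ 2 := by
  have hW := nonneg (n := n) (k := k) hp
  rcases le_total p ε with hpε | hεp
  · have hd : |p - ε| - |p| ≤ ε := by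
      simpa [abs_of_nonneg hε] using abs_sub_abs_le_abs_sub (p - ε) p
    have hWε : bernsteinWeight n k p ≤ n.choose k * ε :=
      (le_choose_mul hk hp).trans (by gcongr)
    calc bernsteinWeight n k p * (|p - ε| - |p|) ≤ bernsteinWeight n k p * ε := by gcongr
      _ ≤ n.choose k * ε * ε := by gcongr
      _ = n.choose k * ε ^ 2 := by ring
  · rw [abs_of_nonneg (by linarith), abs_of_nonneg hp.1, sub_sub_cancel_left]
    have : 0 ≤ (n.choose k : ℝ) * ε ^ 2 := by positivity
    nlinarith

end bernsteinWeight

lemma penalty_eq_sum (n : ℕ) (a : Fin (n+1) → ℝ) (p : ℝ) :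
    penalty n a p = ∑ k : Fin (n+1), bernsteinWeight n k p * |p - a k| := rfl

lemma continuous_penalty (n : ℕ) (a : Fin (n+1) → ℝ) : Continuous (penalty n a) := by
  unfold penalty; fun_prop

lemma penalty_const (n : ℕ) (c p : ℝ) : penalty n (fun _ => c) p = |p - c| := by
  rw [penalty_eq_sum, ← Finset.sum_mul, bernsteinWeight.sum_fin, one_mul]

lemma penalty_zero (n : ℕ) (a : Fin (n+1) → ℝ) : penalty n a 0 = |a 0| := by
  rw [penalty_eq_sum, Fintype.sum_eq_single 0]
  · simp [bernsteinWeight]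
  · intro k hk
    simp [bernsteinWeight, Fin.val_ne_zero_iff.mpr hk]

lemma penalty_one (n : ℕ) (a : Fin (n+1) → ℝ) :
    penalty n a 1 = |1 - a (Fin.last n)| := by
  rw [penalty_eq_sum, Fintype.sum_eq_single (Fin.last n)]
  · simp [bernsteinWeight]
  · intro k hk
    have : (k:ℕ) < n := Fin.val_lt_last hk
    simp [bernsteinWeight, Nat.sub_ne_zero_of_lt this]

lemma penalty_update (n : ℕ) (a : Fin (n+1) → ℝ) (j : Fin (n+1)) (v p : ℝ) :
    penalty n (Function.update a j v) p =
      penalty n a p + bernsteinWeight n j p * (|p - v| - |p - a j|) := by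
  simp only [penalty_eq_sum]
  rw [← Finset.sum_erase_add _ _ (Finset.mem_univ j),
    ← Finset.sum_erase_add _ _ (Finset.mem_univ j), Function.update_self,
    Finset.sum_congr rfl fun k hk => by rw [Function.update_of_ne (Finset.ne_of_mem_erase hk)]]
  ring

lemma penalty_update₃ (n : ℕ) (a : Fin (n+1) → ℝ) {i j k : Fin (n+1)} (hij : i ≠ j) (hik : i ≠ k)
    (hjk : j ≠ k) (u v w p : ℝ) :
    penalty n (Function.update (Function.update (Function.update a i u) j v) k w) p =
      penalty n a p + bernsteinWeight n i p * (|p - u| - |p - a i|) +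
        bernsteinWeight n j p * (|p - v| - |p - a j|) +
        bernsteinWeight n k p * (|p - w| - |p - a k|) := by
  rw [penalty_update, penalty_update, penalty_update, Function.update_of_ne hjk.symm,
    Function.update_of_ne hik.symm, Function.update_of_ne hij.symm]

lemma penalty_le_sSup (n : ℕ) (a : Fin (n+1) → ℝ) {p : ℝ} (hp : p ∈ Set.Icc (0:ℝ) 1) :
    penalty n a p ≤ sSup ((fun p => penalty n a p) '' Set.Icc (0:ℝ) 1) :=
  le_csSup (isCompact_Icc.bddAbove_image (continuous_penalty n a).continuousOn)
    (Set.mem_image_of_mem _ hp)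

lemma sSup_penalty_lt_iff (n : ℕ) (a : Fin (n+1) → ℝ) (M : ℝ) :
    sSup ((fun p => penalty n a p) '' Set.Icc (0:ℝ) 1) < M ↔
      ∀ p ∈ Set.Icc (0:ℝ) 1, penalty n a p < M :=
  isCompact_Icc.sSup_lt_iff_of_continuous (Set.nonempty_Icc.mpr zero_le_one)
    (continuous_penalty n a).continuousOn M

lemma sSup_penalty_pos (n : ℕ) (a : Fin (n+1) → ℝ) :
    0 < sSup ((fun p => penalty n a p) '' Set.Icc (0:ℝ) 1) := by
  have h0 := penalty_le_sSup n a (p := 0) ⟨le_rfl, zero_le_one⟩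
  have hhalf := penalty_le_sSup n a (p := 1 / 2) ⟨by norm_num, by norm_num⟩
  have hterm : bernsteinWeight n 0 (1 / 2) * |1 / 2 - a 0| ≤ penalty n a (1 / 2) :=
    single_le_sum (f := fun k : Fin (n+1) => bernsteinWeight n k (1 / 2) * |1 / 2 - a k|)
      (fun k _ => mul_nonneg (bernsteinWeight.nonneg ⟨by norm_num, by norm_num⟩) (abs_nonneg _))
      (mem_univ 0)
  rw [penalty_zero] at h0
  rw [bernsteinWeight.zero_right] at hterm
  by_contra! h
  have ha0 : a 0 = 0 := abs_eq_zero.1 (le_antisymm (h0.trans h) (abs_nonneg _))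
  have : 0 < (1 - 1 / 2 : ℝ) ^ n * |1 / 2 - a 0| := by rw [ha0]; positivity
  linarith

/-- Both `g ± c · (· - x)` lie below this function near `x` and touch it at `x`, so both would
have derivative `g' x ± c x = 0`. -/
theorem not_isLocalMax_add_mul_abs_sub {g c : ℝ → ℝ} {x : ℝ} (hg : DifferentiableAt ℝ g x)
    (hc : DifferentiableAt ℝ c x) (hcx : 0 < c x) :
    ¬ IsLocalMax (fun p => g p + c p * |p - x|) x := by
  intro hmax
  have hc_pos : ∀ᶠ p in 𝓝 x, 0 < c p := hc.continuousAt.eventually (lt_mem_nhds hcx)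
  have tangent_slope : ∀ s : ℝ, |s| ≤ 1 → deriv g x + s * c x = 0 := by
    intro s hs
    have hd : HasDerivAt (fun p => g p + s * (c p * (p - x))) (deriv g x + s * c x) x := by
      simpa using hg.hasDerivAt.fun_add
        ((hc.hasDerivAt.mul ((hasDerivAt_id x).sub_const x)).const_mul s)
    refine IsLocalMax.hasDerivAt_eq_zero ?_ hd
    filter_upwards [hmax, hc_pos] with p hp hcp
    have : s * (c p * (p - x)) ≤ c p * |p - x| := by
      calc s * (c p * (p - x)) ≤ |s * (c p * (p - x))| := le_abs_self _
        _ = |s| * (c p * |p - x|) := by rw [abs_mul, abs_mul, abs_of_pos hcp]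
        _ ≤ 1 * (c p * |p - x|) := by gcongr
        _ = c p * |p - x| := one_mul _
    simp only [sub_self, abs_zero, mul_zero, add_zero] at hp ⊢
    linarith
  linarith [tangent_slope 1 (by simp), tangent_slope (-1) (by simp)]

theorem penalty_not_isLocalMax (n : ℕ) (a : Fin (n+1) → ℝ) (i : Fin (n+1))
    (hi : a i ∈ Set.Ioo (0:ℝ) 1) : ¬ IsLocalMax (penalty n a) (a i) := by
  classical
  set x := a i
  have hsplit : penalty n a = fun p =>
      (∑ k ∈ univ.filter (a · ≠ x), bernsteinWeight n k p * |p - a k|) +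
        (∑ k ∈ univ.filter (a · = x), bernsteinWeight n k p) * |p - x| := by
    ext p
    rw [penalty_eq_sum, ← sum_filter_not_add_sum_filter univ (a · = x), sum_mul]
    congr 1
    exact sum_congr rfl fun k hk => by rw [(mem_filter.mp hk).2]
  rw [hsplit]
  refine not_isLocalMax_add_mul_abs_sub ?_ (by unfold bernsteinWeight; fun_prop) ?_
  · refine DifferentiableAt.fun_sum fun k hk => ?_
    have hk : x - a k ≠ 0 := sub_ne_zero.mpr (Ne.symm (mem_filter.mp hk).2)
    exact (by unfold bernsteinWeight; fun_prop : DifferentiableAt ℝ (bernsteinWeight n k) x).mul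
      ((differentiableAt_id.sub_const (a k)).abs hk)
  · exact lt_of_lt_of_le (bernsteinWeight.pos (Nat.lt_succ_iff.mp i.isLt) hi)
      (single_le_sum (fun k _ => (bernsteinWeight.nonneg (Set.Ioo_subset_Icc_self hi)))
        (mem_filter.mpr ⟨mem_univ i, rfl⟩))

def reflect {n : ℕ} (a : Fin (n+1) → ℝ) : Fin (n+1) → ℝ := fun k => 1 - a k.rev

lemma penalty_reflect (n : ℕ) (a : Fin (n+1) → ℝ) (p : ℝ) :
    penalty n (reflect a) p = penalty n a (1 - p) := by
  simp only [penalty_eq_sum, reflect]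
  refine Fintype.sum_equiv Fin.revPerm _ _ fun k => ?_
  have hk : (k:ℕ) ≤ n := Nat.lt_succ_iff.mp k.isLt
  simp only [Fin.revPerm_apply, Fin.val_rev, bernsteinWeight,
    show n + 1 - (k + 1) = n - k by omega, Nat.choose_symm hk, Nat.sub_sub_self hk]
  rw [show p - (1 - a k.rev) = -(1 - p - a k.rev) by ring, abs_neg, sub_sub_cancel]
  ring

lemma image_penalty_reflect (n : ℕ) (a : Fin (n+1) → ℝ) :
    (fun p => penalty n (reflect a) p) '' Set.Icc (0:ℝ) 1 =
      (fun p => penalty n a p) '' Set.Icc (0:ℝ) 1 := by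
  simp only [penalty_reflect]
  rw [← Function.comp_def (penalty n a) (1 - ·), Set.image_comp, Set.image_const_sub_Icc]
  norm_num

lemma reflect_mem_Icc {n : ℕ} {a : Fin (n+1) → ℝ} (ha : ∀ k, a k ∈ Set.Icc (0:ℝ) 1)
    (k : Fin (n+1)) :
    reflect a k ∈ Set.Icc (0:ℝ) 1 := by
  obtain ⟨h0, h1⟩ := ha k.rev
  exact ⟨by simp [reflect, h1], by simp [reflect, h0]⟩

lemma reflect_reflect {n : ℕ} (a : Fin (n+1) → ℝ) : reflect (reflect a) = a := by
  ext k; simp [reflect]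

lemma isOptimal_reflect {n : ℕ} {a : Fin (n+1) → ℝ} (ha : IsOptimal n a) :
    IsOptimal n (reflect a) := by
  refine ⟨reflect_mem_Icc ha.1, fun b hb => ?_⟩
  simpa [image_penalty_reflect, reflect_reflect] using ha.2 (reflect b) (reflect_mem_Icc hb)

lemma IsOptimal.sSup_le_half {n : ℕ} {a : Fin (n+1) → ℝ} (ha : IsOptimal n a) :
    sSup ((fun p => penalty n a p) '' Set.Icc (0:ℝ) 1) ≤ 1 / 2 := by
  refine (ha.2 (fun _ => 1 / 2) fun _ => ⟨by norm_num, by norm_num⟩).trans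
    (csSup_le ((Set.nonempty_Icc.mpr zero_le_one).image _) ?_)
  rintro _ ⟨p, ⟨hp0, hp1⟩, rfl⟩
  dsimp only
  rw [penalty_const, abs_le]
  constructor <;> linarith

lemma abs_sub_max_le_abs_sub {u t p : ℝ} (htp : t ≤ p) : |p - max u t| ≤ |p - u| := by
  rcases le_total u t with hut | htu
  · rw [max_eq_right hut, abs_of_nonneg (by linarith), abs_of_nonneg (by linarith)]
    linarith
  · rw [max_eq_left htu]

lemma mul_abs_sub_sub_abs_sub_le {w : ℝ} (hw : 0 ≤ w) (p u v : ℝ) :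
    w * (|p - v| - |p - u|) ≤ w * |u - v| :=
  mul_le_mul_of_nonneg_left (by simpa using abs_sub_abs_le_abs_sub (p - v) (p - u)) hw

lemma pow_mul_abs_sub_max_sub_le {n : ℕ} {u t δ' p : ℝ} (ht : t ≤ u + δ') (hδ' : 0 ≤ δ')
    (hp : p ∈ Set.Icc (0:ℝ) 1) : p ^ n * (|p - max u t| - |p - u|) ≤ δ' := by
  have h : |u - max u t| ≤ δ' := by
    rw [abs_sub_comm, abs_of_nonneg (sub_nonneg.2 (le_max_left u t))]
    linarith [max_le (by linarith : u ≤ u + δ') ht]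
  calc p ^ n * (|p - max u t| - |p - u|) ≤ p ^ n * |u - max u t| :=
        mul_abs_sub_sub_abs_sub_le (pow_nonneg hp.1 n) _ _ _
    _ ≤ δ' := (mul_le_of_le_one_left (abs_nonneg _) (pow_le_one₀ hp.1 hp.2)).trans h

theorem perturbation_neg_of_le_half {n i : ℕ} (hi1 : 1 ≤ i) {M c ε δ δ' u p : ℝ} (hM : M ≤ 1)
    (hc : c ≤ (M / 2) ^ n) (hε : 0 ≤ ε) (hδ : 0 ≤ δ) (hδM : δ ≤ M / 2) (hδ' : 0 ≤ δ')
    (hu : 1 - M ≤ u) (hbudget : n.choose i * ε ^ 2 + δ' < δ * c) (hp0 : 0 ≤ p) (hp : p ≤ M / 2) :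
    (1 - p) ^ n * (|p - (M - δ)| - |p - M|) + bernsteinWeight n i p * (|p - ε| - |p|) +
      p ^ n * (|p - max u (1 - M + δ')| - |p - u|) < 0 := by
  have hT0 : (1 - p) ^ n * (|p - (M - δ)| - |p - M|) = -(δ * (1 - p) ^ n) := by
    rw [abs_of_nonpos (by linarith), abs_of_nonpos (by linarith)]; ring
  have hc1 : δ * c ≤ δ * (1 - p) ^ n :=
    mul_le_mul_of_nonneg_left (hc.trans (pow_le_pow_left₀ (by linarith) (by linarith) n)) hδ
  have hTi := bernsteinWeight.mul_abs_sub_sub_abs_le (n := n) hi1 hε ⟨hp0, by linarith⟩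
  have hTN := pow_mul_abs_sub_max_sub_le (n := n) (p := p) (u := u) (t := 1 - M + δ')
    (by linarith) hδ' ⟨hp0, by linarith⟩
  linarith

theorem perturbation_neg_of_mem_Icc {n i : ℕ} (hin : i ≤ n) {M c ε δ δ' u p : ℝ}
    (hc : c ≤ (M / 2) ^ n) (hε : 0 ≤ ε) (hεM : ε ≤ M / 2) (hδ : 0 ≤ δ) (hδ' : 0 ≤ δ')
    (hu : 1 - M ≤ u) (hbudget : δ + δ' < ε * c) (hp : p ∈ Set.Icc (M / 2) (1 - M / 2)) :
    (1 - p) ^ n * (|p - (M - δ)| - |p - M|) + bernsteinWeight n i p * (|p - ε| - |p|) +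
      p ^ n * (|p - max u (1 - M + δ')| - |p - u|) < 0 := by
  obtain ⟨hp0, hp1⟩ := hp
  have hT0 : (1 - p) ^ n * (|p - (M - δ)| - |p - M|) ≤ δ := by
    refine (mul_abs_sub_sub_abs_sub_le (pow_nonneg (by linarith) n) _ _ _).trans ?_
    rw [sub_sub_cancel, abs_of_nonneg hδ]
    exact mul_le_of_le_one_left hδ (pow_le_one₀ (by linarith) (by linarith))
  have hTi : bernsteinWeight n i p * (|p - ε| - |p|) ≤ -(ε * c) := by
    have hcW := hc.trans (bernsteinWeight.pow_le hin (by linarith) hp0 hp1)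
    rw [abs_of_nonneg (by linarith), abs_of_nonneg (by linarith)]
    nlinarith
  have hTN := pow_mul_abs_sub_max_sub_le (n := n) (p := p) (u := u) (t := 1 - M + δ')
    (by linarith) hδ' ⟨by linarith, by linarith⟩
  linarith

theorem perturbation_neg_of_one_sub_le {n i : ℕ} (hin : i ≤ n) {M c ε δ δ' u p : ℝ} (hM : M ≤ 1)
    (hc : c ≤ (M / 2) ^ n) (hε : 0 ≤ ε) (hεM : ε ≤ M / 2) (hδ : 0 ≤ δ) (hδ'M : δ' ≤ M / 2)
    (hbudget : δ < ε * c) (hp : 1 - M / 2 ≤ p) (hp1 : p < 1) :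
    (1 - p) ^ n * (|p - (M - δ)| - |p - M|) + bernsteinWeight n i p * (|p - ε| - |p|) +
      p ^ n * (|p - max u (1 - M + δ')| - |p - u|) < 0 := by
  have hM0 : 0 ≤ M / 2 := by linarith
  have hq : 0 < (1 - p) ^ (n - i) := pow_pos (by linarith) _
  have hT0 : (1 - p) ^ n * (|p - (M - δ)| - |p - M|) ≤ δ * (1 - p) ^ (n - i) := by
    refine (mul_abs_sub_sub_abs_sub_le (pow_nonneg (by linarith) n) _ _ _).trans ?_
    rw [sub_sub_cancel, abs_of_nonneg hδ, mul_comm]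
    exact mul_le_mul_of_nonneg_left (pow_le_pow_of_le_one (by linarith) (by linarith) (by omega)) hδ
  have hTi : bernsteinWeight n i p * (|p - ε| - |p|) ≤ -(ε * c * (1 - p) ^ (n - i)) := by
    have hcW : c * (1 - p) ^ (n - i) ≤ bernsteinWeight n i p :=
      le_trans (by gcongr; exact hc.trans (pow_le_pow_of_le_one hM0 (by linarith) hin))
        (bernsteinWeight.pow_mul_pow_le hin hM0 (by linarith) hp1.le)
    rw [abs_of_nonneg (by linarith), abs_of_nonneg (by linarith)]
    nlinarith
  have hTN : p ^ n * (|p - max u (1 - M + δ')| - |p - u|) ≤ 0 :=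
    mul_nonpos_of_nonneg_of_nonpos (pow_nonneg (by linarith) n)
      (by linarith [abs_sub_max_le_abs_sub (u := u) (by linarith : 1 - M + δ' ≤ p)])
  nlinarith

lemma exists_perturbation_sizes {M c K : ℝ} (hc : 0 < c) (hcM : c ≤ M / 2) (hM : M ≤ 1)
    (hK : 0 ≤ K) :
    ∃ ε δ δ' : ℝ, 0 < ε ∧ ε ≤ M / 2 ∧ 0 < δ ∧ δ ≤ M / 2 ∧ 0 < δ' ∧ δ' ≤ M / 2 ∧
      K * ε ^ 2 + δ' < δ * c ∧ δ + δ' < ε * c := by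
  set ε := c ^ 2 / (8 * (K + 1))
  have hε : 0 < ε := by positivity
  have hεK : 8 * (K + 1) * ε = c ^ 2 := mul_div_cancel₀ _ (by positivity)
  have hεc : ε ≤ c / 8 := by nlinarith
  refine ⟨ε, ε * c / 4, ε * c ^ 2 / 16, hε, by linarith, by positivity, by nlinarith,
    by positivity, by nlinarith, ?_, ?_⟩
  · nlinarith [mul_pos hε (pow_pos hc 2)]
  · nlinarith [mul_pos hε hc]

theorem exists_forall_penalty_lt {n : ℕ} {a : Fin (n+1) → ℝ} (ha : ∀ k, a k ∈ Set.Icc (0:ℝ) 1)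
    {M : ℝ} (hM : 0 < M) (hM2 : M ≤ 1 / 2) (hle : ∀ p ∈ Set.Icc (0:ℝ) 1, penalty n a p ≤ M)
    (ha0 : a 0 = M) {i : Fin (n+1)} (hi : a i = 0) :
    ∃ b : Fin (n+1) → ℝ, (∀ k, b k ∈ Set.Icc (0:ℝ) 1) ∧
      ∀ p ∈ Set.Icc (0:ℝ) 1, penalty n b p < M := by
  have hN : 1 - M ≤ a (Fin.last n) := by
    have := hle 1 ⟨zero_le_one, le_rfl⟩
    rw [penalty_one] at this
    linarith [le_abs_self (1 - a (Fin.last n))]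
  have hi0 : i ≠ 0 := by rintro rfl; linarith
  have hiN : i ≠ Fin.last n := by rintro rfl; linarith
  have hi1 : 1 ≤ (i:ℕ) := Nat.one_le_iff_ne_zero.mpr (Fin.val_ne_zero_iff.mpr hi0)
  have hin : (i:ℕ) < n := Fin.val_lt_last hiN
  have h0N : (0 : Fin (n+1)) ≠ Fin.last n := by simp [Fin.ext_iff]; omega
  obtain ⟨ε, δ, δ', hε, hεM, hδ, hδM, hδ', hδ'M, hbudget₁, hbudget₂⟩ :=
    exists_perturbation_sizes (c := (M / 2) ^ n) (K := n.choose i) (by positivity)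
      (pow_le_of_le_one (by positivity) (by linarith) (by omega)) (by linarith) (by positivity)
  refine ⟨Function.update (Function.update (Function.update a 0 (M - δ)) i ε) (Fin.last n)
    (max (a (Fin.last n)) (1 - M + δ')), fun k => ?_, fun p ⟨hp0, hp1⟩ => ?_⟩
  · simp only [Function.update_apply]
    split_ifs
    · exact ⟨(ha _).1.trans (le_max_left _ _), max_le (ha _).2 (by linarith)⟩
    · exact ⟨hε.le, by linarith⟩
    · exact ⟨by linarith, by linarith⟩
    · exact ha k
  rcases hp1.lt_or_eq with hp1 | rfl
  · rw [penalty_update₃ n a hi0.symm h0N hiN, ha0, hi, Fin.val_zero, Fin.val_last,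
      bernsteinWeight.zero_right, bernsteinWeight.self, sub_zero]
    have := hle p ⟨hp0, hp1.le⟩
    rcases le_or_gt p (M / 2) with hp | hp
    · linarith [perturbation_neg_of_le_half hi1 (u := a (Fin.last n)) (by linarith) le_rfl hε.le
        hδ.le hδM hδ'.le hN hbudget₁ hp0 hp]
    rcases le_or_gt p (1 - M / 2) with hp' | hp'
    · linarith [perturbation_neg_of_mem_Icc hin.le (u := a (Fin.last n)) le_rfl hε.le hεM hδ.le
        hδ'.le hN hbudget₂ ⟨hp.le, hp'⟩]
    · linarith [perturbation_neg_of_one_sub_le hin.le (u := a (Fin.last n)) (by linarith) le_rfl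
        hε.le hεM hδ.le hδ'M (by linarith) hp'.le hp1]
  · rw [penalty_one, Function.update_self, abs_lt]
    constructor <;> linarith [le_max_right (a (Fin.last n)) (1 - M + δ'),
      max_le (ha (Fin.last n)).2 (by linarith : 1 - M + δ' ≤ 1)]

theorem IsOptimal.penalty_zero_ne_sSup {n : ℕ} {a : Fin (n+1) → ℝ} (ha : IsOptimal n a)
    {i : Fin (n+1)} (hi : a i = 0) :
    penalty n a 0 ≠ sSup ((fun p => penalty n a p) '' Set.Icc (0:ℝ) 1) := by
  intro hmax
  have ha0 : a 0 = sSup ((fun p => penalty n a p) '' Set.Icc (0:ℝ) 1) := by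
    rw [← hmax, penalty_zero, abs_of_nonneg (ha.1 0).1]
  obtain ⟨b, hb, hlt⟩ := exists_forall_penalty_lt ha.1 (sSup_penalty_pos n a) ha.sSup_le_half
    (fun p hp => penalty_le_sSup n a hp) ha0 hi
  exact (ha.2 b hb).not_gt ((sSup_penalty_lt_iff n b _).2 hlt)

theorem stmt_3_general (n : ℕ) (a : Fin (n+1) → ℝ) (ha : IsOptimal n a) :
    ∀ i : Fin (n+1),
      penalty n a (a i) ≠ sSup ((fun p => penalty n a p) '' Set.Icc (0:ℝ) 1) := by
  intro i hmax
  obtain ⟨h0, h1⟩ := ha.1 i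
  rcases h0.lt_or_eq with h0 | h0
  · rcases h1.lt_or_eq with h1 | h1
    · refine penalty_not_isLocalMax n a i ⟨h0, h1⟩ (IsMaxOn.isLocalMax ?_ (Icc_mem_nhds h0 h1))
      exact fun p hp => hmax ▸ penalty_le_sSup n a hp
    · refine (isOptimal_reflect ha).penalty_zero_ne_sSup (i := i.rev) (by simp [reflect, h1]) ?_
      rw [h1] at hmax
      rwa [penalty_reflect, image_penalty_reflect, sub_zero]
  · exact ha.penalty_zero_ne_sSup h0.symm (h0 ▸ hmax)

theorem stmt_3 (n : ℕ) (hn : 0 < n) (a : Fin (n+1) → ℝ) (ha : IsOptimal n a) :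
    ∀ i : Fin (n+1),
      penalty n a (a i) ≠ sSup ((fun p => penalty n a p) '' Set.Icc (0:ℝ) 1) :=
  stmt_3_general n a ha
end

section
/- Suppose for each n, K_n = {\alpha_{0n} \le \alpha_{1n} \le ... \le \alpha_{nn}} \subset [0,1] is an ordered node set and \lim_{n\to\infty} \|D(K_n;\cdot)\|_\infty = 0. Then the normalized counting measures \delta_{K_n} = \frac{1}{n+1}\sum_{j=0}^n \delta_{\alpha_{jn}} converge weak-* to the Lebesgue measure on [0,1]. -/
/-!
Write `b_{n,k}(p) = C(n,k) p^k (1-p)^(n-k)`. Each `b_{n,k}` has integral `1/(n+1)` over `[0,1]`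
(a Beta integral), so the average `(n+1)⁻¹ ∑ f(α_{kn})` is the integral of
`B_n f(p) = ∑ b_{n,k}(p) f(α_{kn})`. A continuous `f` on `[0,1]` satisfies
`|f x - f y| ≤ ε + C_ε |x - y|`, and the `b_{n,k}(p)` are probability weights in `k`, hence
`|B_n f(p) - f(p)| ≤ ε + C_ε D(K_n; p)`. Integrating, the average is within
`ε + C_ε ‖D(K_n; ·)‖_∞` of `∫₀¹ f`.
-/

open Finset Filter

theorem integral_pow_mul_one_sub_pow (k m : ℕ) :
    ∫ x in (0:ℝ)..1, x ^ k * (1 - x) ^ m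
      = (k.factorial * m.factorial / (k + m + 1).factorial : ℝ) := by
  have h := Complex.betaIntegral_eq_Gamma_mul_div (k + 1) (m + 1)
    (by simp; positivity) (by simp; positivity)
  rw [show (k + 1 : ℂ) + (m + 1) = ((k + m + 1 : ℕ) : ℂ) + 1 by push_cast; ring,
    Complex.Gamma_nat_eq_factorial, Complex.Gamma_nat_eq_factorial,
    Complex.Gamma_nat_eq_factorial, Complex.betaIntegral] at h
  simp only [add_sub_cancel_right, Complex.cpow_natCast] at h
  rw [← Complex.ofReal_inj, ← intervalIntegral.integral_ofReal]
  push_cast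
  exact h

theorem integral_choose_mul_pow_mul_one_sub_pow {n k : ℕ} (hk : k ≤ n) :
    ∫ x in (0:ℝ)..1, (n.choose k : ℝ) * x ^ k * (1 - x) ^ (n - k) = 1 / (n + 1) := by
  simp_rw [mul_assoc, intervalIntegral.integral_const_mul, integral_pow_mul_one_sub_pow,
    Nat.add_sub_cancel' hk, Nat.factorial_succ, ← Nat.choose_mul_factorial_mul_factorial hk]
  have := (Nat.choose_pos hk).ne'
  have := (Nat.factorial_pos k).ne'
  have := (Nat.factorial_pos (n - k)).ne'
  push_cast
  field_simp

theorem integral_sum_bernstein_mul (n : ℕ) (c : ℕ → ℝ) :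
    ∫ x in (0:ℝ)..1, ∑ k ∈ range (n + 1), (n.choose k : ℝ) * x ^ k * (1 - x) ^ (n - k) * c k
      = 1 / (n + 1) * ∑ k ∈ range (n + 1), c k := by
  rw [intervalIntegral.integral_finsetSum fun k _ => by
    apply Continuous.intervalIntegrable; fun_prop, mul_sum]
  refine sum_congr rfl fun k hk => ?_
  rw [intervalIntegral.integral_mul_const,
    integral_choose_mul_pow_mul_one_sub_pow (Nat.lt_succ_iff.mp (mem_range.mp hk))]

theorem sum_bernstein_eq_one (n : ℕ) (p : ℝ) :
    ∑ k ∈ range (n + 1), (n.choose k : ℝ) * p ^ k * (1 - p) ^ (n - k) = 1 := by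
  calc _ = (p + (1 - p)) ^ n := by rw [add_pow]; exact sum_congr rfl fun k _ => by ring
    _ = 1 := by rw [add_sub_cancel, one_pow]

theorem abs_sum_mul_sub_le_of_sum_eq_one {ι : Type*} {s : Finset ι} {w g d : ι → ℝ} {c ε C : ℝ}
    (hw : ∀ i ∈ s, 0 ≤ w i) (hsum : ∑ i ∈ s, w i = 1)
    (hg : ∀ i ∈ s, |g i - c| ≤ ε + C * d i) :
    |∑ i ∈ s, w i * g i - c| ≤ ε + C * ∑ i ∈ s, w i * d i :=
  calc |∑ i ∈ s, w i * g i - c| = |∑ i ∈ s, w i * (g i - c)| := by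
        simp only [mul_sub, sum_sub_distrib, ← sum_mul, hsum, one_mul]
    _ ≤ ∑ i ∈ s, w i * |g i - c| := by
        refine (abs_sum_le_sum_abs _ _).trans_eq (sum_congr rfl fun i hi => ?_)
        rw [abs_mul, abs_of_nonneg (hw i hi)]
    _ ≤ ∑ i ∈ s, w i * (ε + C * d i) :=
        sum_le_sum fun i hi => mul_le_mul_of_nonneg_left (hg i hi) (hw i hi)
    _ = ε + C * ∑ i ∈ s, w i * d i := by
        simp only [mul_add, sum_add_distrib, ← sum_mul, hsum, one_mul, mul_sum, mul_left_comm]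

theorem IsCompact.exists_dist_le_add_mul_dist {α β : Type*} [PseudoMetricSpace α]
    [PseudoMetricSpace β] {f : α → β} {s : Set α} (hs : IsCompact s) (hf : ContinuousOn f s)
    {ε : ℝ} (hε : 0 < ε) :
    ∃ C, 0 ≤ C ∧ ∀ x ∈ s, ∀ y ∈ s, dist (f x) (f y) ≤ ε + C * dist x y := by
  obtain ⟨δ, hδ, hfδ⟩ :=
    Metric.uniformContinuousOn_iff.mp (hs.uniformContinuousOn_of_continuous hf) ε hε
  obtain ⟨B, hB⟩ := Metric.isBounded_iff.mp (hs.image_of_continuousOn hf).isBounded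
  refine ⟨max B 0 / δ, by positivity, fun x hx y hy => ?_⟩
  rcases lt_or_ge (dist x y) δ with hxy | hxy
  · have : 0 ≤ max B 0 / δ * dist x y := by positivity
    linarith [hfδ x hx y hy hxy]
  · calc dist (f x) (f y) ≤ max B 0 := (hB (Set.mem_image_of_mem f hx)
          (Set.mem_image_of_mem f hy)).trans (le_max_left _ _)
      _ = max B 0 / δ * δ := by field_simp
      _ ≤ ε + max B 0 / δ * dist x y := by
          nlinarith [mul_le_mul_of_nonneg_left hxy (by positivity : 0 ≤ max B 0 / δ)]

theorem abs_average_sub_integral_le {f : ℝ → ℝ} (hf : ContinuousOn f (Set.Icc 0 1))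
    {ε C : ℝ} (hC : 0 ≤ C)
    (hmod : ∀ x ∈ Set.Icc (0:ℝ) 1, ∀ y ∈ Set.Icc (0:ℝ) 1, |f x - f y| ≤ ε + C * |x - y|)
    (n : ℕ) (a : ℕ → ℝ) (ha : ∀ k ≤ n, a k ∈ Set.Icc (0:ℝ) 1) :
    |1 / ((n : ℝ) + 1) * ∑ k ∈ range (n + 1), f (a k) - ∫ x in (0:ℝ)..1, f x|
      ≤ ε + C * sSup ((fun p => ∑ k ∈ range (n + 1),
          (n.choose k : ℝ) * p ^ k * (1 - p) ^ (n - k) * |p - a k|) '' Set.Icc (0:ℝ) 1) := by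
  set D := fun p => ∑ k ∈ range (n + 1), (n.choose k : ℝ) * p ^ k * (1 - p) ^ (n - k) * |p - a k|
  have hD : Continuous D := by fun_prop
  set S := sSup (D '' Set.Icc 0 1)
  have hpoint : ∀ p ∈ Set.Icc (0:ℝ) 1, |∑ k ∈ range (n + 1),
      (n.choose k : ℝ) * p ^ k * (1 - p) ^ (n - k) * f (a k) - f p| ≤ ε + C * S := by
    intro p hp
    refine (abs_sum_mul_sub_le_of_sum_eq_one (d := fun k => |p - a k|) (ε := ε) (C := C)
      (fun k _ => ?_) (sum_bernstein_eq_one n p) fun k hk => ?_).trans ?_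
    · have := hp.1; have := sub_nonneg.mpr hp.2; positivity
    · rw [abs_sub_comm p]; exact hmod _ (ha k (Nat.lt_succ_iff.mp (mem_range.mp hk))) p hp
    · gcongr
      exact hD.continuousOn.le_sSup_image_Icc hp
  have hintegral : ∫ x in (0:ℝ)..1, (∑ k ∈ range (n + 1),
        (n.choose k : ℝ) * x ^ k * (1 - x) ^ (n - k) * f (a k) - f x)
      = 1 / ((n : ℝ) + 1) * ∑ k ∈ range (n + 1), f (a k) - ∫ x in (0:ℝ)..1, f x := by
    rw [intervalIntegral.integral_sub (Continuous.intervalIntegrable (by fun_prop) _ _)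
      (hf.intervalIntegrable_of_Icc zero_le_one), integral_sum_bernstein_mul]
  rw [← hintegral, ← Real.norm_eq_abs]
  refine (intervalIntegral.norm_integral_le_of_norm_le_const (C := ε + C * S)
    fun p hp => ?_).trans_eq (by simp)
  rw [Set.uIoc_of_le zero_le_one] at hp
  exact hpoint p (Set.Ioc_subset_Icc_self hp)

theorem tendsto_of_abs_sub_le_add_mul {a S : ℕ → ℝ} {L : ℝ} (hS : Tendsto S atTop (nhds 0))
    (h : ∀ ε > 0, ∃ C, ∀ n, |a n - L| ≤ ε + C * S n) : Tendsto a atTop (nhds L) := by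
  refine Metric.tendsto_nhds.mpr fun η hη => ?_
  obtain ⟨C, hC⟩ := h (η / 2) (half_pos hη)
  have hlim : Tendsto (fun n => η / 2 + C * S n) atTop (nhds (η / 2)) := by
    simpa using tendsto_const_nhds.add (hS.const_mul C)
  filter_upwards [hlim.eventually (gt_mem_nhds (half_lt_self hη))] with n hn
  exact (Real.dist_eq _ _).trans_le (hC n) |>.trans_lt hn

theorem stmt_8_general (α : ℕ → ℕ → ℝ)
    (hmem : ∀ n, ∀ k ≤ n, α n k ∈ Set.Icc (0:ℝ) 1)
    (hnorm : Tendsto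
      (fun n : ℕ => sSup ((fun p => ∑ k ∈ Finset.range (n+1),
        (n.choose k : ℝ) * p ^ k * (1 - p) ^ (n - k) * |p - α n k|) '' Set.Icc (0:ℝ) 1))
      atTop (nhds 0)) :
    ∀ f : ℝ → ℝ, ContinuousOn f (Set.Icc (0:ℝ) 1) →
      Tendsto (fun n : ℕ => (1 / ((n : ℝ) + 1)) * ∑ k ∈ Finset.range (n+1), f (α n k))
        atTop (nhds (∫ x in (0:ℝ)..1, f x)) := by
  intro f hf
  refine tendsto_of_abs_sub_le_add_mul hnorm fun ε hε => ?_
  obtain ⟨C, hC, hmod⟩ := isCompact_Icc.exists_dist_le_add_mul_dist hf hε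
  simp only [Real.dist_eq] at hmod
  exact ⟨C, fun n => abs_average_sub_integral_le hf hC hmod n (α n) (hmem n)⟩

theorem stmt_8 (α : ℕ → ℕ → ℝ)
    (hmem : ∀ n, ∀ k ≤ n, α n k ∈ Set.Icc (0:ℝ) 1)
    (hord : ∀ n, ∀ j k, j ≤ k → k ≤ n → α n j ≤ α n k)
    (hnorm : Tendsto
      (fun n : ℕ => sSup ((fun p => ∑ k ∈ Finset.range (n+1),
        (n.choose k : ℝ) * p ^ k * (1 - p) ^ (n - k) * |p - α n k|) '' Set.Icc (0:ℝ) 1))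
      atTop (nhds 0)) :
    ∀ f : ℝ → ℝ, ContinuousOn f (Set.Icc (0:ℝ) 1) →
      Tendsto (fun n : ℕ => (1 / ((n : ℝ) + 1)) * ∑ k ∈ Finset.range (n+1), f (α n k))
        atTop (nhds (∫ x in (0:ℝ)..1, f x)) :=
  stmt_8_general α hmem hnorm
end

section
/- Suppose K_n are ordered node sets in [0,1] with \|D(K_n;\cdot)\|_\infty \to 0. Then for every p in (0,1), \limsup_{n\to\infty} |K_n \cap [0,p]|/(n+1) \le p and \liminf_{n\to\infty} |K_n \cap [0,p]|/(n+1) \ge p. -/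
/-!
Let `N` be the number of nodes `α_{kn} ≤ p`. Monotonicity of the nodes gives `α_{kn} ≤ p ↔ k < N`.
If `N ≥ b (n + 1)` with `b > p`, evaluate `D(K_n; ·)` at `q = (p + b) / 2`: by Chebyshev's
inequality for the binomial distribution, at least half of the mass sits at indices `k` with
`|k - n q| < (b - p) n / 4`, all of which satisfy `k < N`, hence `α_{kn} ≤ p` and
`|q - α_{kn}| ≥ (b - p) / 2`. So `‖D(K_n; ·)‖_∞ ≥ (b - p) / 4`, which fails for large `n`.
The case `N ≤ a (n + 1)` with `a < p` is symmetric, so `N / (n + 1) → p`.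
-/

open Finset Filter Topology

noncomputable def binomWeight (n k : ℕ) (p : ℝ) : ℝ := n.choose k * p ^ k * (1 - p) ^ (n - k)

-- With `g k = α_{kn}`, `bernsteinDist g n p` is `D(K_n; p)` and `countLE g n p` is `|K_n ∩ [0, p]|`.
noncomputable def bernsteinDist (g : ℕ → ℝ) (n : ℕ) (p : ℝ) : ℝ :=
  ∑ k ∈ range (n + 1), binomWeight n k p * |p - g k|

noncomputable def countLE (g : ℕ → ℝ) (n : ℕ) (p : ℝ) : ℕ := #{k ∈ range (n + 1) | g k ≤ p}

section Binomial

variable {n : ℕ} {p : ℝ}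

lemma binomWeight_nonneg (k : ℕ) (h0 : 0 ≤ p) (h1 : p ≤ 1) : 0 ≤ binomWeight n k p := by
  have : 0 ≤ 1 - p := by linarith
  unfold binomWeight
  positivity

lemma sum_binomWeight (n : ℕ) (p : ℝ) : ∑ k ∈ range (n + 1), binomWeight n k p = 1 := by
  have := add_pow p (1 - p) n
  rw [add_sub_cancel, one_pow] at this
  rw [this]
  exact sum_congr rfl fun k _ => by unfold binomWeight; ring

lemma sum_sq_mul_binomWeight (n : ℕ) (p : ℝ) :
    ∑ k ∈ range (n + 1), ((n : ℝ) * p - k) ^ 2 * binomWeight n k p = n * p * (1 - p) := by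
  have := congrArg (Polynomial.aeval p) (bernsteinPolynomial.variance ℝ n)
  simp only [map_sum, map_mul, map_pow, map_sub, Polynomial.aeval_X,
    Polynomial.aeval_natCast, nsmul_eq_mul, map_one] at this
  rw [← this]
  refine sum_congr rfl fun k _ => ?_
  simp [binomWeight, bernsteinPolynomial]

lemma sum_binomWeight_far_le (hn : 0 < n) (h0 : 0 ≤ p) (h1 : p ≤ 1) {δ : ℝ} (hδ : 0 < δ) :
    ∑ k ∈ range (n + 1) with δ * n ≤ |((k : ℕ) : ℝ) - n * p|, binomWeight n k p
      ≤ 1 / (4 * δ ^ 2 * n) := by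
  have hn' : (0 : ℝ) < n := by exact_mod_cast hn
  have hpos : (0 : ℝ) < (δ * n) ^ 2 := by positivity
  calc ∑ k ∈ range (n + 1) with δ * n ≤ |((k : ℕ) : ℝ) - n * p|, binomWeight n k p
      ≤ ∑ k ∈ range (n + 1) with δ * n ≤ |((k : ℕ) : ℝ) - n * p|,
          ((n : ℝ) * p - k) ^ 2 / (δ * n) ^ 2 * binomWeight n k p := by
        refine sum_le_sum fun k hk => le_mul_of_one_le_left (binomWeight_nonneg k h0 h1) ?_
        rw [one_le_div hpos, ← sq_abs ((n : ℝ) * p - k), abs_sub_comm]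
        exact pow_le_pow_left₀ (by positivity) (mem_filter.mp hk).2 2
    _ ≤ ∑ k ∈ range (n + 1), ((n : ℝ) * p - k) ^ 2 / (δ * n) ^ 2 * binomWeight n k p :=
        sum_le_sum_of_subset_of_nonneg (filter_subset _ _) fun k _ _ =>
          mul_nonneg (by positivity) (binomWeight_nonneg k h0 h1)
    _ = n * p * (1 - p) / (δ * n) ^ 2 := by
        rw [← sum_sq_mul_binomWeight n p, sum_div]
        exact sum_congr rfl fun k _ => by ring
    _ ≤ 1 / (4 * δ ^ 2 * n) := by
        rw [div_le_div_iff₀ hpos (by positivity)]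
        nlinarith [sq_nonneg (1 - 2 * p), mul_pos hn' hn']

lemma mul_le_sum_binomWeight_mul (hn : 0 < n) (h0 : 0 ≤ p) (h1 : p ≤ 1) {δ c : ℝ}
    (hδ : 0 < δ) (hc : 0 ≤ c) {f : ℕ → ℝ} (hf0 : ∀ k ∈ range (n + 1), 0 ≤ f k)
    (hf : ∀ k ∈ range (n + 1), |((k : ℕ) : ℝ) - n * p| < δ * n → c ≤ f k) :
    c * (1 - 1 / (4 * δ ^ 2 * n)) ≤ ∑ k ∈ range (n + 1), binomWeight n k p * f k := by
  have hnear : 1 - 1 / (4 * δ ^ 2 * n) ≤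
      ∑ k ∈ range (n + 1) with ¬δ * n ≤ |((k : ℕ) : ℝ) - n * p|, binomWeight n k p := by
    have := sum_filter_add_sum_filter_not (range (n + 1))
      (fun k : ℕ => δ * n ≤ |((k : ℕ) : ℝ) - n * p|) (fun k => binomWeight n k p)
    linarith [sum_binomWeight n p, sum_binomWeight_far_le hn h0 h1 hδ]
  calc c * (1 - 1 / (4 * δ ^ 2 * n))
      ≤ ∑ k ∈ range (n + 1) with ¬δ * n ≤ |((k : ℕ) : ℝ) - n * p|, c * binomWeight n k p := by
        rw [← mul_sum]; gcongr
    _ ≤ ∑ k ∈ range (n + 1) with ¬δ * n ≤ |((k : ℕ) : ℝ) - n * p|, binomWeight n k p * f k := by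
        refine sum_le_sum fun k hk => ?_
        rw [mem_filter, not_le] at hk
        rw [mul_comm]
        exact mul_le_mul_of_nonneg_left (hf k hk.1 hk.2) (binomWeight_nonneg k h0 h1)
    _ ≤ ∑ k ∈ range (n + 1), binomWeight n k p * f k :=
        sum_le_sum_of_subset_of_nonneg (filter_subset _ _) fun k hk _ =>
          mul_nonneg (binomWeight_nonneg k h0 h1) (hf0 k hk)

end Binomial

section BernsteinDist

variable {g : ℕ → ℝ} {n : ℕ} {q δ c : ℝ}

lemma continuous_bernsteinDist (g : ℕ → ℝ) (n : ℕ) : Continuous (bernsteinDist g n) := by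
  unfold bernsteinDist binomWeight
  fun_prop

lemma bernsteinDist_le_sSup (g : ℕ → ℝ) (n : ℕ) (hq : q ∈ Set.Icc (0 : ℝ) 1) :
    bernsteinDist g n q ≤ sSup (bernsteinDist g n '' Set.Icc 0 1) :=
  le_csSup (isCompact_Icc.bddAbove_image (continuous_bernsteinDist g n).continuousOn)
    (Set.mem_image_of_mem _ hq)

lemma half_le_bernsteinDist (hn : 1 ≤ 2 * δ ^ 2 * n) (hq : q ∈ Set.Icc (0 : ℝ) 1)
    (hδ : 0 < δ) (hc : 0 ≤ c) (hg : ∀ k ≤ n, |(k : ℝ) - n * q| < δ * n → c ≤ |q - g k|) :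
    c / 2 ≤ bernsteinDist g n q := by
  have hn0 : 0 < n := Nat.pos_of_ne_zero (by rintro rfl; norm_num at hn)
  have hn' : (0 : ℝ) < n := by exact_mod_cast hn0
  have htail : 1 / (4 * δ ^ 2 * n) ≤ 1 / 2 := by
    rw [div_le_div_iff₀ (by positivity) (by norm_num)]
    linarith
  have := mul_le_sum_binomWeight_mul hn0 hq.1 hq.2 hδ hc (f := fun k => |q - g k|)
    (fun _ _ => abs_nonneg _) fun k hk => hg k (Nat.lt_succ_iff.mp (mem_range.mp hk))
  unfold bernsteinDist
  nlinarith

end BernsteinDist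

lemma lt_countLE_iff {g : ℕ → ℝ} {n k : ℕ} {p : ℝ} (hg : MonotoneOn g (Set.Iic n))
    (hk : k ≤ n) : k < countLE g n p ↔ g k ≤ p := by
  constructor
  · intro hlt
    by_contra! hgk
    have hsub : {j ∈ range (n + 1) | g j ≤ p} ⊆ range k := fun j hj => by
      rw [mem_filter, mem_range] at hj
      rw [mem_range]
      by_contra! hkj
      exact (hgk.trans_le (hg (Set.mem_Iic.mpr hk) (Set.mem_Iic.mpr (by omega)) hkj)).not_ge hj.2
    exact hlt.not_ge ((card_le_card hsub).trans_eq (card_range k))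
  · intro hgk
    have hsub : range (k + 1) ⊆ {j ∈ range (n + 1) | g j ≤ p} := fun j hj => by
      rw [mem_range] at hj
      rw [mem_filter, mem_range]
      exact ⟨by omega, (hg (Set.mem_Iic.mpr (by omega)) (Set.mem_Iic.mpr hk) (by omega)).trans hgk⟩
    exact (card_range (k + 1)).symm.trans_le (card_le_card hsub)

section Nodes

variable {α : ℕ → ℕ → ℝ} {g : ℕ → ℝ} {n : ℕ} {p a b : ℝ}

lemma le_bernsteinDist_of_le_countLE (hg : MonotoneOn g (Set.Iic n)) (hp : 0 ≤ p) (hpb : p < b)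
    (hb : b ≤ 1) (hn : 8 ≤ (b - p) ^ 2 * n) (hN : b * (n + 1) ≤ countLE g n p) :
    (b - p) / 4 ≤ bernsteinDist g n ((p + b) / 2) := by
  have hn0 : (0 : ℝ) ≤ n := n.cast_nonneg
  have hδ : 1 ≤ 2 * ((b - p) / 4) ^ 2 * n := by
    linarith [show 2 * ((b - p) / 4) ^ 2 * n = (b - p) ^ 2 * n / 8 by ring]
  have hgap : ∀ k ≤ n, |(k : ℝ) - n * ((p + b) / 2)| < (b - p) / 4 * n →
      (b - p) / 2 ≤ |(p + b) / 2 - g k| := fun k hk hnear => by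
    have hkN : (k : ℝ) < countLE g n p := calc
      (k : ℝ) < n * ((p + b) / 2) + (b - p) / 4 * n := by linarith [(abs_lt.mp hnear).2]
      _ ≤ b * (n + 1) := by nlinarith
      _ ≤ countLE g n p := hN
    have := (lt_countLE_iff hg hk).mp (by exact_mod_cast hkN)
    rw [abs_of_nonneg (by linarith)]
    linarith
  linarith [half_le_bernsteinDist hδ ⟨by linarith, by linarith⟩ (by linarith) (by linarith) hgap]

lemma le_bernsteinDist_of_countLE_le (hg : MonotoneOn g (Set.Iic n)) (ha : 0 ≤ a) (hap : a < p)
    (hp : p ≤ 1) (hn : 8 ≤ (p - a) ^ 2 * n) (hn' : 4 * a ≤ (p - a) * n)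
    (hN : countLE g n p ≤ a * (n + 1)) :
    (p - a) / 4 ≤ bernsteinDist g n ((p + a) / 2) := by
  have hn0 : (0 : ℝ) ≤ n := n.cast_nonneg
  have hδ : 1 ≤ 2 * ((p - a) / 4) ^ 2 * n := by
    linarith [show 2 * ((p - a) / 4) ^ 2 * n = (p - a) ^ 2 * n / 8 by ring]
  have hgap : ∀ k ≤ n, |(k : ℝ) - n * ((p + a) / 2)| < (p - a) / 4 * n →
      (p - a) / 2 ≤ |(p + a) / 2 - g k| := fun k hk hnear => by
    have hNk : (countLE g n p : ℝ) < k := calc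
      (countLE g n p : ℝ) ≤ a * (n + 1) := hN
      _ ≤ n * ((p + a) / 2) - (p - a) / 4 * n := by linarith
      _ < k := by linarith [(abs_lt.mp hnear).1]
    have := (lt_countLE_iff hg hk).not.mp (by exact_mod_cast hNk.le.not_gt)
    rw [abs_sub_comm, abs_of_nonneg (by linarith)]
    linarith
  linarith [half_le_bernsteinDist hδ ⟨by linarith, by linarith⟩ (by linarith) (by linarith) hgap]

variable (hD : Tendsto (fun n => sSup (bernsteinDist (α n) n '' Set.Icc 0 1)) atTop (𝓝 0))
include hD

lemma eventually_bernsteinDist_lt {q c : ℝ} (hq : q ∈ Set.Icc (0 : ℝ) 1) (hc : 0 < c) :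
    ∀ᶠ n in atTop, bernsteinDist (α n) n q < c :=
  (hD.eventually (gt_mem_nhds hc)).mono fun _ hn => (bernsteinDist_le_sSup _ _ hq).trans_lt hn

variable (hα : ∀ n, MonotoneOn (α n) (Set.Iic n))
include hα

lemma eventually_countLE_div_lt (hp : 0 ≤ p) (hpb : p < b) (hb : b ≤ 1) :
    ∀ᶠ n in atTop, (countLE (α n) n p : ℝ) / (n + 1) < b := by
  filter_upwards [eventually_bernsteinDist_lt hD (q := (p + b) / 2) ⟨by linarith, by linarith⟩
      (show 0 < (b - p) / 4 by linarith),
    tendsto_natCast_atTop_atTop.eventually_ge_atTop (8 / (b - p) ^ 2)] with n hDn hn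
  rw [div_lt_iff₀ (by positivity)]
  by_contra! hN
  rw [div_le_iff₀ (by positivity), mul_comm] at hn
  exact (le_bernsteinDist_of_le_countLE (hα n) hp hpb hb hn hN).not_gt hDn

lemma eventually_lt_countLE_div (ha : 0 ≤ a) (hap : a < p) (hp : p ≤ 1) :
    ∀ᶠ n in atTop, a < (countLE (α n) n p : ℝ) / (n + 1) := by
  filter_upwards [eventually_bernsteinDist_lt hD (q := (p + a) / 2) ⟨by linarith, by linarith⟩
      (show 0 < (p - a) / 4 by linarith),
    tendsto_natCast_atTop_atTop.eventually_ge_atTop (8 / (p - a) ^ 2),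
    tendsto_natCast_atTop_atTop.eventually_ge_atTop (4 * a / (p - a))] with n hDn hn hn'
  rw [lt_div_iff₀ (by positivity)]
  by_contra! hN
  rw [div_le_iff₀ (by positivity), mul_comm] at hn
  rw [div_le_iff₀ (by linarith)] at hn'
  exact (le_bernsteinDist_of_countLE_le (hα n) ha hap hp hn (by linarith) hN).not_gt hDn

theorem tendsto_countLE_div (hp : p ∈ Set.Ioo (0 : ℝ) 1) :
    Tendsto (fun n => (countLE (α n) n p : ℝ) / (n + 1)) atTop (𝓝 p) := by
  refine tendsto_order.2 ⟨fun a ha => ?_, fun b hb => ?_⟩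
  · filter_upwards [eventually_lt_countLE_div hD hα (le_max_right a 0) (max_lt ha hp.1) hp.2.le]
      with n hn
    exact (le_max_left a 0).trans_lt hn
  · filter_upwards [eventually_countLE_div_lt hD hα hp.1.le (lt_min hb hp.2) (min_le_right b 1)]
      with n hn
    exact hn.trans_le (min_le_left b 1)

end Nodes

theorem stmt_9_general (α : ℕ → ℕ → ℝ)
    (hord : ∀ n, ∀ j k, j ≤ k → k ≤ n → α n j ≤ α n k)
    (hnorm : Tendsto
      (fun n => sSup ((fun p => ∑ k ∈ Finset.range (n+1),
        (n.choose k : ℝ) * p ^ k * (1 - p) ^ (n - k) * |p - α n k|) '' Set.Icc (0:ℝ) 1))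
      atTop (nhds 0)) :
    ∀ p ∈ Set.Ioo (0:ℝ) 1,
      limsup (fun n =>
        (((Finset.range (n+1)).filter (fun k => α n k ≤ p)).card : ℝ) / (n + 1)) atTop ≤ p ∧
      p ≤ liminf (fun n =>
        (((Finset.range (n+1)).filter (fun k => α n k ≤ p)).card : ℝ) / (n + 1)) atTop := by
  intro p hp
  have h := tendsto_countLE_div hnorm (fun n _ hj _ hk hjk => hord n _ _ hjk hk) hp
  exact ⟨h.limsup_eq.le, h.liminf_eq.ge⟩

theorem stmt_9 (α : ℕ → ℕ → ℝ)
    (hmem : ∀ n, ∀ k ≤ n, α n k ∈ Set.Icc (0:ℝ) 1)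
    (hord : ∀ n, ∀ j k, j ≤ k → k ≤ n → α n j ≤ α n k)
    (hnorm : Tendsto
      (fun n => sSup ((fun p => ∑ k ∈ Finset.range (n+1),
        (n.choose k : ℝ) * p ^ k * (1 - p) ^ (n - k) * |p - α n k|) '' Set.Icc (0:ℝ) 1))
      atTop (nhds 0)) :
    ∀ p ∈ Set.Ioo (0:ℝ) 1,
      limsup (fun n =>
        (((Finset.range (n+1)).filter (fun k => α n k ≤ p)).card : ℝ) / (n + 1)) atTop ≤ p ∧
      p ≤ liminf (fun n =>
        (((Finset.range (n+1)).filter (fun k => α n k ≤ p)).card : ℝ) / (n + 1)) atTop :=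
  stmt_9_general α hord hnorm
end

section
/- If q \in (0,1), n is a positive integer, and k is an integer with k - qn > q (equivalently k > q(n+1)), then \sum_{\ell=0}^{k} \binom{n}{\ell} q^\ell (1-q)^{n-\ell} > 1/2. -/
/-!
With `n = k + m + 1`, the lower tail `G x = P(Bin(n, x) ≤ k)` has derivative
`-n * (n-1).choose k * x ^ k * (1 - x) ^ m`, so `G` is strictly decreasing on `[0, 1]` and it is
enough to show `G S ≥ 1/2` at `S = k / (n + 1) > q`. As `G 0 = 1`, this says that the
density `f x = x ^ k * (1 - x) ^ m` has at most as much mass on `[0, S]` as on `[S, 1]`. This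
follows from a decreasing map `φ` of `[0, S]` into `[S, 1]` fixing `S` with
`f ≤ -φ' * (f ∘ φ)`: for `k ≤ m` the reflection `x ↦ 2S - x` works, for `m ≤ k` the reflection
about `S` in log-odds coordinates, for which the condition reads
`x ^ (k+1) * (1 - x) ^ (m+1) ≤ φ x ^ (k+1) * (1 - φ x) ^ (m+1)`. Both comparisons follow by
differentiating the log-density along the reflection.
-/

open Finset Polynomial Real

theorem derivative_sum_bernsteinPolynomial {R : Type*} [CommRing R] (n k : ℕ) :
    derivative (∑ ν ∈ range (k + 1), bernsteinPolynomial R n ν) =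
      -n * bernsteinPolynomial R (n - 1) k := by
  induction k with
  | zero => simp [bernsteinPolynomial.derivative_zero]
  | succ k ih =>
    rw [sum_range_succ, derivative_add, ih, bernsteinPolynomial.derivative_succ]
    ring

noncomputable def binomCDF (n k : ℕ) : ℝ[X] :=
  ∑ ν ∈ range (k + 1), bernsteinPolynomial ℝ n ν

namespace binomCDF

theorem eval_eq (n k : ℕ) (x : ℝ) :
    (binomCDF n k).eval x =
      ∑ l ∈ range (k + 1), (n.choose l : ℝ) * x ^ l * (1 - x) ^ (n - l) := by
  simp [binomCDF, bernsteinPolynomial, eval_finsetSum]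

theorem eval_zero (n k : ℕ) : (binomCDF n k).eval 0 = 1 := by
  simp [binomCDF, eval_finsetSum, bernsteinPolynomial.eval_at_0]

theorem eval_of_le {n k : ℕ} (h : n ≤ k) (x : ℝ) : (binomCDF n k).eval x = 1 := by
  obtain ⟨d, rfl⟩ := Nat.exists_eq_add_of_le h
  rw [binomCDF, add_right_comm, sum_range_add, bernsteinPolynomial.sum,
    sum_eq_zero fun ν _ => bernsteinPolynomial.eq_zero_of_lt ℝ (by omega)]
  simp

theorem eval_nonneg (n k : ℕ) {x : ℝ} (hx : x ∈ Set.Icc 0 1) :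
    0 ≤ (binomCDF n k).eval x := by
  rw [eval_eq]
  have : 0 ≤ 1 - x := sub_nonneg.2 hx.2
  have := hx.1
  positivity

theorem hasDerivAt (k m : ℕ) (x : ℝ) :
    HasDerivAt (fun x => (binomCDF (k + m + 1) k).eval x)
      (-(((k + m + 1) * (k + m).choose k : ℝ) * (x ^ k * (1 - x) ^ m))) x := by
  refine ((binomCDF (k + m + 1) k).hasDerivAt x).congr_deriv ?_
  rw [binomCDF, derivative_sum_bernsteinPolynomial]
  simp only [bernsteinPolynomial, add_tsub_cancel_right, add_tsub_cancel_left, eval_mul, eval_neg,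
    eval_natCast, eval_pow, eval_X, eval_sub, eval_one]
  push_cast
  ring

theorem strictAntiOn (k m : ℕ) :
    StrictAntiOn (fun x => (binomCDF (k + m + 1) k).eval x) (Set.Icc 0 1) := by
  refine strictAntiOn_of_deriv_neg (convex_Icc 0 1) (Polynomial.continuousOn _)
    fun x hx => ?_
  rw [interior_Icc] at hx
  have : 0 < 1 - x := sub_pos.2 hx.2
  have := hx.1
  rw [(hasDerivAt k m x).deriv, neg_lt_zero]
  have := Nat.choose_pos (Nat.le_add_right k m)
  positivity

theorem one_le_two_mul_eval_of_reflection {k m : ℕ} {S : ℝ} {φ φ' : ℝ → ℝ}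
    (hS : 0 ≤ S) (hφ0 : φ 0 ∈ Set.Icc 0 1) (hφS : φ S = S) (hφc : ContinuousOn φ (Set.Icc 0 S))
    (hφ : ∀ x ∈ Set.Ioo 0 S, HasDerivAt φ (φ' x) x)
    (hdom : ∀ x ∈ Set.Ioo 0 S, x ^ k * (1 - x) ^ m ≤ -φ' x * (φ x ^ k * (1 - φ x) ^ m)) :
    1 ≤ 2 * (binomCDF (k + m + 1) k).eval S := by
  set G := fun x => (binomCDF (k + m + 1) k).eval x
  have hΦ : ∀ x ∈ Set.Ioo 0 S, HasDerivAt (fun x => G x + G (φ x))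
      (((k + m + 1) * (k + m).choose k : ℝ) *
        (-φ' x * (φ x ^ k * (1 - φ x) ^ m) - x ^ k * (1 - x) ^ m)) x := fun x hx =>
    ((hasDerivAt k m x).add ((hasDerivAt k m (φ x)).comp x (hφ x hx))).congr_deriv (by ring)
  have hmono : MonotoneOn (fun x => G x + G (φ x)) (Set.Icc 0 S) := by
    refine monotoneOn_of_deriv_nonneg (convex_Icc 0 S)
      ((Polynomial.continuousOn _).add ((Polynomial.continuous _).comp_continuousOn hφc))
      (fun x hx => ?_) fun x hx => ?_ <;> rw [interior_Icc] at hx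
    · exact (hΦ x hx).differentiableAt.differentiableWithinAt
    · rw [(hΦ x hx).deriv]
      exact mul_nonneg (by positivity) (sub_nonneg.2 (hdom x hx))
  have := hmono ⟨le_rfl, hS⟩ ⟨hS, le_rfl⟩ hS
  simp only [G, hφS, eval_zero] at this
  linarith [eval_nonneg (k + m + 1) k hφ0]

end binomCDF

noncomputable def logDensity (a b y : ℝ) : ℝ := a * log y + b * log (1 - y)

theorem hasDerivAt_logDensity (a b : ℝ) {y : ℝ} (hy : y ∈ Set.Ioo 0 1) :
    HasDerivAt (logDensity a b) (a / y - b / (1 - y)) y := by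
  have h1 := ((hasDerivAt_id y).const_sub 1).log (sub_pos.2 hy.2).ne'
  have h0 := (hasDerivAt_id y).log hy.1.ne'
  refine ((h0.const_mul a).add (h1.const_mul b)).congr_deriv ?_
  simp only [id]
  ring

theorem pow_mul_pow_le_of_logDensity_le (k m : ℕ) {y z : ℝ} (hy : y ∈ Set.Ioo 0 1)
    (hz : z ∈ Set.Ioo 0 1) (h : logDensity k m y ≤ logDensity k m z) :
    y ^ k * (1 - y) ^ m ≤ z ^ k * (1 - z) ^ m := by
  have := hy.1; have := hz.1; have := sub_pos.2 hy.2; have := sub_pos.2 hz.2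
  rwa [← log_le_log_iff (by positivity) (by positivity), log_mul (by positivity) (by positivity),
    log_mul (by positivity) (by positivity), log_pow, log_pow, log_pow, log_pow]

theorem logDensity_le_logDensity_comp {a b S x : ℝ} {φ φ' : ℝ → ℝ} (hS : S < 1)
    (hx : x ∈ Set.Ioc 0 S) (hφ : ∀ y ∈ Set.Ioc 0 S, φ y ∈ Set.Ioo 0 1 ∧ HasDerivAt φ (φ' y) y)
    (hφS : φ S = S)
    (hderiv : ∀ y ∈ Set.Ioo 0 S, (a / φ y - b / (1 - φ y)) * φ' y ≤ a / y - b / (1 - y)) :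
    logDensity a b x ≤ logDensity a b (φ x) := by
  have hψ : ∀ y ∈ Set.Ioc 0 S, HasDerivAt (fun y => logDensity a b (φ y) - logDensity a b y)
      ((a / φ y - b / (1 - φ y)) * φ' y - (a / y - b / (1 - y))) y := fun y hy =>
    ((hasDerivAt_logDensity a b (hφ y hy).1).comp y (hφ y hy).2).sub
      (hasDerivAt_logDensity a b ⟨hy.1, hy.2.trans_lt hS⟩)
  have hanti : AntitoneOn (fun y => logDensity a b (φ y) - logDensity a b y) (Set.Ioc 0 S) := by
    refine antitoneOn_of_deriv_nonpos (convex_Ioc 0 S)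
      (fun y hy => (hψ y hy).continuousAt.continuousWithinAt) (fun y hy => ?_) fun y hy => ?_
      <;> rw [interior_Ioc] at hy
    · exact (hψ y (Set.Ioo_subset_Ioc_self hy)).differentiableAt.differentiableWithinAt
    · rw [(hψ y (Set.Ioo_subset_Ioc_self hy)).deriv]
      exact sub_nonpos.2 (hderiv y hy)
  have := hanti hx ⟨hx.1.trans_le hx.2, le_rfl⟩ hx.2
  simp only [hφS, sub_self] at this
  linarith

/-- The reflection about `S` in log-odds coordinates: the odds of `logitReflect S y` times the
odds of `y` equal the squared odds of `S`. -/
noncomputable def logitReflect (S y : ℝ) : ℝ :=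
  S ^ 2 * (1 - y) / (S ^ 2 * (1 - y) + (1 - S) ^ 2 * y)

section logitReflect

variable {S y : ℝ}

theorem logitReflect_denom_pos (hS : S ∈ Set.Ioo 0 1) (hy : y ∈ Set.Icc 0 1) :
    0 < S ^ 2 * (1 - y) + (1 - S) ^ 2 * y := by
  have := hS.1; have := sub_pos.2 hS.2; have := hy.1; have := sub_nonneg.2 hy.2
  rcases hy.1.eq_or_lt with rfl | hy0
  · simpa using pow_pos hS.1 2
  · positivity

theorem logitReflect_self (hS : S ∈ Set.Ioo 0 1) : logitReflect S S = S := by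
  have := hS.1.ne'; have := (sub_pos.2 hS.2).ne'
  rw [logitReflect, div_eq_iff (logitReflect_denom_pos hS ⟨hS.1.le, hS.2.le⟩).ne']
  ring

theorem logitReflect_zero (hS : S ≠ 0) : logitReflect S 0 = 1 := by
  simp [logitReflect, hS]

theorem logitReflect_mem_Ioo (hS : S ∈ Set.Ioo 0 1) (hy : y ∈ Set.Ioo 0 1) :
    logitReflect S y ∈ Set.Ioo 0 1 := by
  have hD := logitReflect_denom_pos hS ⟨hy.1.le, hy.2.le⟩
  have := hS.1; have := sub_pos.2 hS.2; have := hy.1; have := sub_pos.2 hy.2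
  rw [logitReflect, Set.mem_Ioo, div_lt_one hD]
  constructor <;> [positivity; nlinarith [mul_pos (pow_pos (sub_pos.2 hS.2) 2) hy.1]]

theorem one_sub_logitReflect (hS : S ∈ Set.Ioo 0 1) (hy : y ∈ Set.Icc 0 1) :
    1 - logitReflect S y = (1 - S) ^ 2 * y / (S ^ 2 * (1 - y) + (1 - S) ^ 2 * y) := by
  rw [logitReflect, one_sub_div (logitReflect_denom_pos hS hy).ne']
  ring_nf

theorem continuousOn_logitReflect (hS : S ∈ Set.Ioo 0 1) :
    ContinuousOn (logitReflect S) (Set.Icc 0 1) :=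
  ContinuousOn.div (by fun_prop) (by fun_prop) fun y hy => (logitReflect_denom_pos hS hy).ne'

theorem hasDerivAt_logitReflect (hS : S ∈ Set.Ioo 0 1) (hy : y ∈ Set.Ioo 0 1) :
    HasDerivAt (logitReflect S)
      (-(logitReflect S y * (1 - logitReflect S y) / (y * (1 - y)))) y := by
  have hD := logitReflect_denom_pos hS ⟨hy.1.le, hy.2.le⟩
  have := hy.1.ne'; have := (sub_pos.2 hy.2).ne'
  have hnum : HasDerivAt (fun y => S ^ 2 * (1 - y)) (-S ^ 2) y := by
    simpa using ((hasDerivAt_id y).const_sub 1).const_mul (S ^ 2)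
  have hden : HasDerivAt (fun y => S ^ 2 * (1 - y) + (1 - S) ^ 2 * y)
      ((1 - S) ^ 2 - S ^ 2) y :=
    (hnum.add ((hasDerivAt_id y).const_mul ((1 - S) ^ 2))).congr_deriv (by ring)
  refine (hnum.div hden hD.ne').congr_deriv ?_
  rw [one_sub_logitReflect hS ⟨hy.1.le, hy.2.le⟩, logitReflect]
  generalize hDdef : S ^ 2 * (1 - y) + (1 - S) ^ 2 * y = D at hD ⊢
  field_simp
  rw [← hDdef]
  ring

theorem add_logitReflect_le (hS : S ∈ Set.Ioo 0 1) (hy : y ∈ Set.Icc 0 1) :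
    y + logitReflect S y ≤ max (2 * S) 1 := by
  have hD := logitReflect_denom_pos hS hy
  rw [logitReflect, ← le_sub_iff_add_le', div_le_iff₀ hD]
  rcases le_total S (1 / 2) with h | h
  · rw [max_eq_right (by linarith)]
    nlinarith [mul_nonneg (mul_nonneg hy.1 (sub_nonneg.2 hy.2)) (by linarith : 0 ≤ 1 - 2 * S)]
  · rw [max_eq_left (by linarith)]
    nlinarith [mul_nonneg (by linarith : 0 ≤ 2 * S - 1) (sq_nonneg (S - y))]

end logitReflect

theorem deriv_logDensity_reflect_le {a b S y : ℝ} (hN : 0 ≤ a + b + 2)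
    (hS : S * (a + b + 2) = a) (h2S : 2 * S ≤ 1) (hy : y ∈ Set.Ioo 0 S) :
    (a / (2 * S - y) - b / (1 - (2 * S - y))) * -1 ≤ a / y - b / (1 - y) := by
  obtain ⟨hy0, hyS⟩ := hy
  generalize hNdef : a + b + 2 = N at hN hS
  obtain rfl : a = S * N := hS.symm
  obtain rfl : b = (1 - S) * N - 2 := by linarith
  have h1 : 0 < 2 * S - y := by linarith
  have h2 : 0 < 1 - (2 * S - y) := by linarith
  have h3 : 0 < 1 - y := by linarith
  suffices ((1 - S) * N - 2) / (1 - y) + ((1 - S) * N - 2) / (1 - (2 * S - y)) ≤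
      S * N / y + S * N / (2 * S - y) by linarith
  rw [div_add_div _ _ h3.ne' h2.ne', div_add_div _ _ hy0.ne' h1.ne',
    div_le_div_iff₀ (by positivity) (by positivity)]
  have := mul_nonneg (mul_nonneg hN (sq_nonneg (S - y))) (by linarith : 0 ≤ 1 - 2 * S)
  have := mul_nonneg (by linarith : 0 ≤ 1 - S) (mul_pos hy0 h1).le
  linarith

theorem deriv_logDensity_logitReflect_le {a b ρ y : ℝ} (hρ : ρ ∈ Set.Ioo 0 1)
    (hy : y ∈ Set.Ioo 0 1) (h : (a + b) * (y + ρ) ≤ 2 * a) :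
    (a / ρ - b / (1 - ρ)) * -(ρ * (1 - ρ) / (y * (1 - y))) ≤ a / y - b / (1 - y) := by
  have := hρ.1; have := sub_pos.2 hρ.2; have := hy.1; have := sub_pos.2 hy.2
  rw [← sub_nonneg]
  have : a / y - b / (1 - y) - (a / ρ - b / (1 - ρ)) * -(ρ * (1 - ρ) / (y * (1 - y))) =
      (2 * a - (a + b) * (y + ρ)) / (y * (1 - y)) := by
    field_simp
    ring
  rw [this]
  have : 0 ≤ 2 * a - (a + b) * (y + ρ) := by linarith
  positivity

theorem binomCDF.one_le_two_mul_eval_of_le {k m : ℕ} (h : k ≤ m) :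
    1 ≤ 2 * (binomCDF (k + m + 1) k).eval ((k : ℝ) / (k + m + 2)) := by
  set S : ℝ := k / (k + m + 2)
  have hN : (0 : ℝ) < k + m + 2 := by positivity
  have hSN : S * (k + m + 2) = k := div_mul_cancel₀ _ hN.ne'
  have hS0 : 0 ≤ S := by positivity
  have h2S : 2 * S ≤ 1 := by
    have : (k : ℝ) ≤ m := by exact_mod_cast h
    nlinarith
  have hφ : ∀ y ∈ Set.Ioc 0 S, 2 * S - y ∈ Set.Ioo 0 1 := fun y hy =>
    ⟨by linarith [hy.1, hy.2], by linarith [hy.1]⟩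
  refine one_le_two_mul_eval_of_reflection (φ := fun x => 2 * S - x) (φ' := fun _ => -1) hS0
    ⟨by linarith, by linarith⟩ (by ring) (by fun_prop)
    (fun x _ => by simpa using (hasDerivAt_id x).const_sub (2 * S)) fun x hx => ?_
  rw [neg_neg, one_mul]
  refine pow_mul_pow_le_of_logDensity_le k m ⟨hx.1, by linarith [hx.2]⟩
    (hφ x ⟨hx.1, hx.2.le⟩)
    (logDensity_le_logDensity_comp (by linarith [hx.1, hx.2]) ⟨hx.1, hx.2.le⟩
      (fun y hy => ⟨hφ y hy, by simpa using (hasDerivAt_id y).const_sub (2 * S)⟩) (by ring)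
      fun y hy => deriv_logDensity_reflect_le (by positivity) hSN h2S hy)

theorem binomCDF.one_le_two_mul_eval_of_ge {k m : ℕ} (hk : 0 < k) (h : m ≤ k) :
    1 ≤ 2 * (binomCDF (k + m + 1) k).eval ((k : ℝ) / (k + m + 2)) := by
  set S : ℝ := k / (k + m + 2)
  have hN : (0 : ℝ) < k + m + 2 := by positivity
  have hSN : S * (k + m + 2) = k := div_mul_cancel₀ _ hN.ne'
  have hS : S ∈ Set.Ioo 0 1 := ⟨by positivity, (div_lt_one hN).2 (by linarith)⟩
  have hsum : ∀ y ∈ Set.Icc (0 : ℝ) 1,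
      ((k + 1 : ℕ) + (m + 1 : ℕ)) * (y + logitReflect S y) ≤ 2 * (k + 1 : ℕ) := by
    intro y hy
    have hmk : (m : ℝ) ≤ k := by exact_mod_cast h
    have := add_logitReflect_le hS hy
    push_cast
    rcases le_total (2 * S) 1 with h2S | h2S
    · rw [max_eq_right h2S] at this
      nlinarith
    · rw [max_eq_left h2S] at this
      nlinarith
  have hρ : ∀ y ∈ Set.Ioc 0 S, logitReflect S y ∈ Set.Ioo 0 1 ∧ HasDerivAt (logitReflect S)
      (-(logitReflect S y * (1 - logitReflect S y) / (y * (1 - y)))) y := fun y hy =>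
    ⟨logitReflect_mem_Ioo hS ⟨hy.1, hy.2.trans_lt hS.2⟩,
      hasDerivAt_logitReflect hS ⟨hy.1, hy.2.trans_lt hS.2⟩⟩
  refine one_le_two_mul_eval_of_reflection hS.1.le
    (by rw [logitReflect_zero hS.1.ne']; exact ⟨zero_le_one, le_rfl⟩) (logitReflect_self hS)
    ((continuousOn_logitReflect hS).mono (Set.Icc_subset_Icc le_rfl hS.2.le))
    (fun x hx => (hρ x ⟨hx.1, hx.2.le⟩).2) fun x hx => ?_
  have hx1 : x ∈ Set.Ioo 0 1 := ⟨hx.1, hx.2.trans hS.2⟩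
  have key := pow_mul_pow_le_of_logDensity_le (k + 1) (m + 1) hx1 (hρ x ⟨hx.1, hx.2.le⟩).1
    (logDensity_le_logDensity_comp hS.2 ⟨hx.1, hx.2.le⟩ hρ (logitReflect_self hS)
      fun y hy => deriv_logDensity_logitReflect_le (hρ y ⟨hy.1, hy.2.le⟩).1
        ⟨hy.1, hy.2.trans hS.2⟩ (hsum y ⟨hy.1.le, (hy.2.trans hS.2).le⟩))
  have := hx1.1; have := sub_pos.2 hx1.2
  rw [neg_neg, div_mul_eq_mul_div, le_div_iff₀ (by positivity)]
  calc x ^ k * (1 - x) ^ m * (x * (1 - x)) = x ^ (k + 1) * (1 - x) ^ (m + 1) := by ring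
    _ ≤ _ := key
    _ = _ := by ring

theorem binomCDF.one_le_two_mul_eval (k m : ℕ) :
    1 ≤ 2 * (binomCDF (k + m + 1) k).eval ((k : ℝ) / (k + m + 2)) := by
  rcases le_or_gt k m with h | h
  · exact one_le_two_mul_eval_of_le h
  · exact one_le_two_mul_eval_of_ge (by omega) h.le

theorem stmt_10_general (q : ℝ) (hq : q ∈ Set.Ioo (0:ℝ) 1) (n : ℕ)
    (k : ℕ) (hk : (k : ℝ) - q * n > q) :
    (1:ℝ)/2 < ∑ l ∈ Finset.range (k+1), (n.choose l : ℝ) * q ^ l * (1 - q) ^ (n - l) := by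
  rw [← binomCDF.eval_eq]
  rcases le_or_gt n k with hnk | hkn
  · rw [binomCDF.eval_of_le hnk]
    norm_num
  obtain ⟨m, rfl⟩ : ∃ m, n = k + m + 1 := ⟨n - k - 1, by omega⟩
  have hN : (0 : ℝ) < k + m + 2 := by positivity
  have hqS : q < k / (k + m + 2) := by
    rw [lt_div_iff₀ hN]
    push_cast at hk
    linarith
  have hS1 : (k : ℝ) / (k + m + 2) ≤ 1 := (div_le_one hN).2 (by linarith)
  calc (1 : ℝ) / 2 ≤ (binomCDF (k + m + 1) k).eval ((k : ℝ) / (k + m + 2)) := by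
        linarith [binomCDF.one_le_two_mul_eval k m]
    _ < (binomCDF (k + m + 1) k).eval q :=
        binomCDF.strictAntiOn k m ⟨hq.1.le, hqS.le.trans hS1⟩ ⟨(hq.1.trans hqS).le, hS1⟩ hqS

theorem stmt_10 (q : ℝ) (hq : q ∈ Set.Ioo (0:ℝ) 1) (n : ℕ) (hn : 0 < n)
    (k : ℕ) (hk : (k : ℝ) - q * n > q) :
    (1:ℝ)/2 < ∑ l ∈ Finset.range (k+1), (n.choose l : ℝ) * q ^ l * (1 - q) ^ (n - l) :=
  stmt_10_general q hq n k hk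
end

section
/- For the squared-error penalty function \hat{D}(a_0,...,a_n;p) = \sum_{k=0}^n \binom{n}{k} p^k(1-p)^{n-k}(p-a_k)^2 with a_k = 1/2 + (\sqrt{n}/(1+\sqrt{n}))(k/n - 1/2), the risk function \hat{D} is constant in p on [0,1], equal to 1/(4(1+\sqrt{n})^2). -/
/-!
The estimator `a_k = c + d k` is affine in `k`, with `c = 1 / (2 (1 + √n))` and
`d = √n / ((1 + √n) n)`. Writing `p - a_k = (p - c - d n p) + d (n p - k)` and using the first
two moments of the binomial distribution, the risk is squared bias plus `d²` times the variance:
`(p - c - d n p)² + d² n p (1 - p)`. Here `p - c - d n p = (2p - 1) / (2 (1 + √n))` and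
`d² n = 1 / (1 + √n)²`, so the risk is
`((2p - 1)² + 4p(1 - p)) / (4 (1 + √n)²) = 1 / (4 (1 + √n)²)`.
-/

open Finset

section BinomialMoments

variable {R : Type*} [CommRing R] (n : ℕ) (p : R)

theorem bernsteinPolynomial.eval_eq (k : ℕ) :
    (bernsteinPolynomial R n k).eval p = n.choose k * p ^ k * (1 - p) ^ (n - k) := by
  simp [bernsteinPolynomial]

theorem sum_choose_mul_pow_mul_pow_eq_one :
    ∑ k ∈ range (n + 1), (n.choose k : R) * p ^ k * (1 - p) ^ (n - k) = 1 := by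
  simpa [Polynomial.eval_finsetSum, bernsteinPolynomial.eval_eq] using
    congrArg (Polynomial.eval p) (bernsteinPolynomial.sum R n)

theorem sum_mul_choose_mul_pow_mul_pow :
    ∑ k ∈ range (n + 1), (k : R) * (n.choose k * p ^ k * (1 - p) ^ (n - k)) = n * p := by
  simpa [Polynomial.eval_finsetSum, bernsteinPolynomial.eval_eq, mul_comm] using
    congrArg (Polynomial.eval p) (bernsteinPolynomial.sum_smul R n)

theorem sum_sq_sub_mul_choose_mul_pow_mul_pow :
    ∑ k ∈ range (n + 1), (n * p - k) ^ 2 * (n.choose k * p ^ k * (1 - p) ^ (n - k)) =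
      n * p * (1 - p) := by
  simpa [Polynomial.eval_finsetSum, bernsteinPolynomial.eval_eq, nsmul_eq_mul] using
    congrArg (Polynomial.eval p) (bernsteinPolynomial.variance R n)

theorem sum_choose_mul_pow_mul_pow_mul_sq_sub_affine (c d : R) :
    ∑ k ∈ range (n + 1), (n.choose k : R) * p ^ k * (1 - p) ^ (n - k) * (p - (c + d * k)) ^ 2 =
      (p - c - d * n * p) ^ 2 + d ^ 2 * (n * p * (1 - p)) := by
  have hmean :
      ∑ k ∈ range (n + 1), (n * p - k) * (n.choose k * p ^ k * (1 - p) ^ (n - k)) = 0 := by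
    simp only [sub_mul, sum_sub_distrib, ← mul_sum, sum_choose_mul_pow_mul_pow_eq_one,
      sum_mul_choose_mul_pow_mul_pow]
    ring
  calc _ = ∑ k ∈ range (n + 1), ((p - c - d * n * p) ^ 2 *
          (n.choose k * p ^ k * (1 - p) ^ (n - k)) +
        2 * (p - c - d * n * p) * d * ((n * p - k) * (n.choose k * p ^ k * (1 - p) ^ (n - k))) +
        d ^ 2 * ((n * p - k) ^ 2 * (n.choose k * p ^ k * (1 - p) ^ (n - k)))) :=
        sum_congr rfl fun k _ ↦ by ring
    _ = _ := by
      rw [sum_add_distrib, sum_add_distrib, ← mul_sum, ← mul_sum, ← mul_sum,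
        sum_choose_mul_pow_mul_pow_eq_one, hmean, sum_sq_sub_mul_choose_mul_pow_mul_pow]
      ring

end BinomialMoments

theorem stmt_11 (n : ℕ) (hn : 0 < n) :
    ∀ p ∈ Set.Icc (0:ℝ) 1,
      ∑ k ∈ Finset.range (n+1),
        (n.choose k : ℝ) * p ^ k * (1 - p) ^ (n - k) *
          (p - (1/2 + (Real.sqrt n / (1 + Real.sqrt n)) * ((k : ℝ) / n - 1/2))) ^ 2
      = 1 / (4 * (1 + Real.sqrt n) ^ 2) := by
  intro p _
  set s := Real.sqrt n
  have hs : 0 < s := Real.sqrt_pos.mpr (by exact_mod_cast hn)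
  have hsq : s ^ 2 = n := Real.sq_sqrt (Nat.cast_nonneg n)
  have hn' : (n : ℝ) ≠ 0 := by exact_mod_cast hn.ne'
  have haffine : ∀ k : ℕ, 1/2 + s / (1 + s) * ((k : ℝ) / n - 1/2) =
      1 / (2 * (1 + s)) + s / ((1 + s) * n) * k := fun k ↦ by
    field_simp
    ring
  simp only [haffine, sum_choose_mul_pow_mul_pow_mul_sq_sub_affine]
  rw [← hsq]
  field_simp
  ring
end

section
/- For the one-toss game, the measure \mu = (1/4)\delta_0 + (1/2)\delta_{1/2} + (1/4)\delta_1 satisfies: for all a_0 \in [0,1/2] and a_1 \in [1/2,1], \int_0^1 D(a_0,a_1;p) d\mu(p) = 1/4, and for all a_0, a_1 \in [0,1], \int_0^1 D(a_0,a_1;p) d\mu(p) \ge 1/4. -/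
/-! At `p = 0` and `p = 1` only one term of `D1` survives, so the `μ`-integral is
`(|a₀ - 0| + |1/2 - a₀| + |a₁ - 1/2| + |1 - a₁|) / 4`. By the triangle inequality each pair of
absolute values is at least the length `1/2` of the corresponding interval, with equality
when `a₀ ∈ [0, 1/2]` and `a₁ ∈ [1/2, 1]`. -/

/-- Penalty function for one toss. -/
noncomputable def D1 (a₀ a₁ p : ℝ) : ℝ := (1 - p) * |p - a₀| + p * |p - a₁|

/-- Integral against `μ = δ₀/4 + δ_{1/2}/2 + δ₁/4`. -/
noncomputable def muIntegral (f : ℝ → ℝ) : ℝ := (1/4) * f 0 + (1/2) * f (1/2) + (1/4) * f 1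

theorem muIntegral_D1 (a₀ a₁ : ℝ) :
    muIntegral (D1 a₀ a₁) = ((|a₀ - 0| + |1/2 - a₀|) + (|a₁ - 1/2| + |1 - a₁|)) / 4 := by
  simp only [muIntegral, D1, zero_sub, abs_neg, sub_zero, abs_sub_comm (1/2 : ℝ) a₁]
  ring

theorem sub_le_abs_sub_add_abs_sub (a b x : ℝ) : b - a ≤ |x - a| + |b - x| :=
  (le_abs_self _).trans ((abs_sub_le b x a).trans_eq (add_comm _ _))

theorem abs_sub_add_abs_sub_of_mem_Icc {a b x : ℝ} (hx : x ∈ Set.Icc a b) :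
    |x - a| + |b - x| = b - a := by
  rw [abs_of_nonneg (sub_nonneg.2 hx.1), abs_of_nonneg (sub_nonneg.2 hx.2)]
  ring

theorem stmt_14 :
    (∀ a₀ ∈ Set.Icc (0:ℝ) (1/2), ∀ a₁ ∈ Set.Icc (1/2:ℝ) 1,
      (1/4) * D1 a₀ a₁ 0 + (1/2) * D1 a₀ a₁ (1/2) + (1/4) * D1 a₀ a₁ 1 = 1/4) ∧
    (∀ a₀ ∈ Set.Icc (0:ℝ) 1, ∀ a₁ ∈ Set.Icc (0:ℝ) 1,
      1/4 ≤ (1/4) * D1 a₀ a₁ 0 + (1/2) * D1 a₀ a₁ (1/2) + (1/4) * D1 a₀ a₁ 1) := by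
  refine ⟨fun a₀ h₀ a₁ h₁ => ?_, fun a₀ _ a₁ _ => ?_⟩
  · change muIntegral (D1 a₀ a₁) = 1/4
    rw [muIntegral_D1, abs_sub_add_abs_sub_of_mem_Icc h₀, abs_sub_add_abs_sub_of_mem_Icc h₁]
    norm_num
  · change 1/4 ≤ muIntegral (D1 a₀ a₁)
    rw [muIntegral_D1]
    linarith [sub_le_abs_sub_add_abs_sub 0 (1/2) a₀, sub_le_abs_sub_add_abs_sub (1/2) 1 a₁]
end

section
/- Let p_1 \in (0,1) satisfy (1-p_1)^3 = 2p_1^2, and set a_0 = 2p_1(1-p_1)^2/(p_1^2 + (1-p_1)^2 + 1), a_1 = 1/2, a_2 = 1 - a_0. Then the penalty function f(p) = (1-p)^2|p-a_0| + 2p(1-p)|p-a_1| + p^2|p-a_2| satisfies f(0) = f(1) = f(p_1) = f(1-p_1) = a_0 and f(p) \le a_0 for all p \in [0,1]. -/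
/-!
After `p ↦ 1 - p` (which only permutes the three terms) we may assume `p ≤ 1/2`. With
`a₀ = 2p₁²/(1+p₁)` (an equivalent form of the given value), `f` is the line `a₀(1 - 2p)` on
`[0, a₀]` and a cubic with leading coefficient `2` on `[a₀, 1/2]`. The cubic equation for `p₁`
makes `p₁` a double root of `a₀ - f` there, so `a₀ - f(p) = 2(p - p₁)²(r - p)` with third root
`r = 2 + a₀ - 2p₁ > 1/2`, which is nonnegative on `[a₀, 1/2]`.
-/

namespace TwoTosses

/-- The expected absolute error at bias `p` of the estimate which, after two tosses, answers
`a`, `1/2` or `1 - a` according as zero, one or two heads came up. -/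
noncomputable def penalty (a p : ℝ) : ℝ :=
  (1 - p)^2 * |p - a| + 2 * p * (1 - p) * |p - 1/2| + p^2 * |p - (1 - a)|

theorem penalty_one_sub (a p : ℝ) : penalty a (1 - p) = penalty a p := by
  have h₀ : 1 - p - a = -(p - (1 - a)) := by ring
  have h₁ : 1 - p - 1/2 = -(p - 1/2) := by ring
  have h₂ : 1 - p - (1 - a) = -(p - a) := by ring
  simp only [penalty, h₀, h₁, h₂, abs_neg]
  ring

theorem penalty_of_le {a p : ℝ} (hpa : p ≤ a) (ha : a ≤ 1/2) :
    penalty a p = a * (1 - 2 * p) := by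
  rw [penalty, abs_of_nonpos (by linarith : p - a ≤ 0),
    abs_of_nonpos (by linarith : p - 1/2 ≤ 0), abs_of_nonpos (by linarith : p - (1 - a) ≤ 0)]
  ring

theorem penalty_of_le_of_le_half {a p : ℝ} (hap : a ≤ p) (hp : p ≤ 1/2) :
    penalty a p = 2 * p^3 - (4 + 2 * a) * p^2 + (2 + 2 * a) * p - a := by
  rw [penalty, abs_of_nonneg (by linarith : 0 ≤ p - a),
    abs_of_nonpos (by linarith : p - 1/2 ≤ 0), abs_of_nonpos (by linarith : p - (1 - a) ≤ 0)]
  ring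

section Root

variable {q : ℝ} (hq : (1 - q)^3 = 2 * q^2)
include hq

theorem root_pos : 0 < q := by
  nlinarith [sq_nonneg q, sq_nonneg (1 - q)]

theorem root_lt_half : q < 1/2 := by
  nlinarith [sq_nonneg (q - 1/4)]

theorem div_eq_div_of_root :
    2 * q * (1 - q)^2 / (q^2 + (1 - q)^2 + 1) = 2 * q^2 / (1 + q) := by
  have hq₀ := root_pos hq
  rw [div_eq_div_iff (by positivity) (by positivity)]
  linear_combination (2 * q) * hq

variable {a : ℝ} (ha : a * (1 + q) = 2 * q^2)
include ha

theorem level_pos : 0 < a := by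
  nlinarith [root_pos hq]

theorem level_lt_root : a < q := by
  nlinarith [root_pos hq, root_lt_half hq]

-- `q` is a double root of `a -` cubic; the third root `2 + a - 2q` is forced by Vieta.
theorem cubic_eq_level_sub (p : ℝ) :
    2 * p^3 - (4 + 2 * a) * p^2 + (2 + 2 * a) * p - a
      = a - 2 * (p - q)^2 * (2 + a - 2 * q - p) := by
  have h1q : 1 + q ≠ 0 := by linarith [root_pos hq]
  have hconst : q^2 * (2 + a - 2 * q) = a := by linear_combination (q - 1) * ha
  have hlin : q^2 + 2 * q * (2 + a - 2 * q) = 1 + a :=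
    mul_right_cancel₀ h1q (by linear_combination -hq + (2 * q - 1) * ha)
  linear_combination (-2 * p) * hlin + 2 * hconst

theorem penalty_root : penalty a q = a := by
  rw [penalty_of_le_of_le_half (level_lt_root hq ha).le (root_lt_half hq).le,
    cubic_eq_level_sub hq ha]
  ring

theorem penalty_le_of_le_half {p : ℝ} (hp₀ : 0 ≤ p) (hp : p ≤ 1/2) : penalty a p ≤ a := by
  have ha₀ := level_pos hq ha
  have ha_half : a ≤ 1/2 := by linarith [level_lt_root hq ha, root_lt_half hq]
  rcases le_total p a with hpa | hap
  · rw [penalty_of_le hpa ha_half]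
    nlinarith
  · rw [penalty_of_le_of_le_half hap hp, cubic_eq_level_sub hq ha]
    have : 0 ≤ 2 + a - 2 * q - p := by linarith [root_lt_half hq]
    nlinarith [mul_nonneg (sq_nonneg (p - q)) this]

theorem penalty_le {p : ℝ} (hp₀ : 0 ≤ p) (hp₁ : p ≤ 1) : penalty a p ≤ a := by
  rcases le_total p (1/2) with hp | hp
  · exact penalty_le_of_le_half hq ha hp₀ hp
  · rw [← penalty_one_sub]
    exact penalty_le_of_le_half hq ha (by linarith) (by linarith)

end Root

end TwoTosses

open TwoTosses in
theorem stmt_18_general (p₁ : ℝ)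
    (heq : (1 - p₁)^3 = 2 * p₁^2)
    (a₀ a₁ a₂ : ℝ)
    (ha₀ : a₀ = 2 * p₁ * (1 - p₁)^2 / (p₁^2 + (1 - p₁)^2 + 1))
    (ha₁ : a₁ = 1/2) (ha₂ : a₂ = 1 - a₀)
    (f : ℝ → ℝ)
    (hf : f = fun p => (1 - p)^2 * |p - a₀| + 2 * p * (1 - p) * |p - a₁| + p^2 * |p - a₂|) :
    f 0 = a₀ ∧ f 1 = a₀ ∧ f p₁ = a₀ ∧ f (1 - p₁) = a₀ ∧
      ∀ p ∈ Set.Icc (0:ℝ) 1, f p ≤ a₀ := by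
  have hf' : f = penalty a₀ := by subst hf ha₁ ha₂; rfl
  have ha : a₀ * (1 + p₁) = 2 * p₁^2 := by
    rw [ha₀, div_eq_div_of_root heq, div_mul_cancel₀ _ (by linarith [root_pos heq])]
  have ha_half : a₀ ≤ 1/2 := by linarith [level_lt_root heq ha, root_lt_half heq]
  have hf₀ : f 0 = a₀ := by
    rw [hf', penalty_of_le (level_pos heq ha).le ha_half]
    ring
  subst hf'
  refine ⟨hf₀, ?_, penalty_root heq ha, ?_, fun p hp => penalty_le heq ha hp.1 hp.2⟩
  · simpa [← penalty_one_sub a₀ 0] using hf₀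
  · rw [penalty_one_sub]
    exact penalty_root heq ha

theorem stmt_18 (p₁ : ℝ) (hp₁ : p₁ ∈ Set.Ioo (0:ℝ) 1)
    (heq : (1 - p₁)^3 = 2 * p₁^2)
    (a₀ a₁ a₂ : ℝ)
    (ha₀ : a₀ = 2 * p₁ * (1 - p₁)^2 / (p₁^2 + (1 - p₁)^2 + 1))
    (ha₁ : a₁ = 1/2) (ha₂ : a₂ = 1 - a₀)
    (f : ℝ → ℝ)
    (hf : f = fun p => (1 - p)^2 * |p - a₀| + 2 * p * (1 - p) * |p - a₁| + p^2 * |p - a₂|) :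
    f 0 = a₀ ∧ f 1 = a₀ ∧ f p₁ = a₀ ∧ f (1 - p₁) = a₀ ∧
      ∀ p ∈ Set.Icc (0:ℝ) 1, f p ≤ a₀ :=
  stmt_18_general p₁ heq a₀ a₁ a₂ ha₀ ha₁ ha₂ f hf
end
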